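/- arXiv:1311.1468 — 12 statements merged into one kernel-verified Lean document; each statement's English description precedes it below -/
import Mathlib

section
/- Every countable cs*-network in a Hausdorff topological space X is a k-network for X. -/
open Set Filter Topology TopologicalSpace

/-- A set `A` accumulates at `x` if every neighborhood of `x` contains
infinitely many points of `A`. -/
def AccumulatesAt {X : Type*} [TopologicalSpace X] (A : Set X) (x : X) : Prop :=
  ∀ U ∈ 𝓝 x, (U ∩ A).Infinite

/-- `𝒩` is a network: for each point and open neighborhood there is a member of `𝒩`
containing the point and contained in the neighborhood. -/
def IsNetwork {X : Type*} [TopologicalSpace X] (𝒩 : Set (Set X)) : Prop :=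
  ∀ (x : X) (U : Set X), IsOpen U → x ∈ U → ∃ N ∈ 𝒩, x ∈ N ∧ N ⊆ U

/-- `𝒩` is a Pytkeev network. -/
def IsPytkeevNetwork {X : Type*} [TopologicalSpace X] (𝒩 : Set (Set X)) : Prop :=
  IsNetwork 𝒩 ∧ ∀ (x : X) (U : Set X), IsOpen U → x ∈ U →
    ∀ A : Set X, AccumulatesAt A x → ∃ N ∈ 𝒩, N ⊆ U ∧ (N ∩ A).Infinite

/-- `𝒩` is a k-network. -/
def IsKNetwork {X : Type*} [TopologicalSpace X] (𝒩 : Set (Set X)) : Prop :=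
  ∀ (U K : Set X), IsOpen U → IsCompact K → K ⊆ U →
    ∃ F ⊆ 𝒩, F.Finite ∧ K ⊆ ⋃₀ F ∧ ⋃₀ F ⊆ U

/-- `𝒩` is a cs*-network. -/
def IsCsStarNetwork {X : Type*} [TopologicalSpace X] (𝒩 : Set (Set X)) : Prop :=
  ∀ (x : X) (u : ℕ → X), Tendsto u atTop (𝓝 x) →
    ∀ U : Set X, IsOpen U → x ∈ U →
      ∃ N ∈ 𝒩, N ⊆ U ∧ {n : ℕ | u n ∈ N}.Infinite

/-- A cs*-network is a network (use constant sequences). -/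
theorem IsCsStarNetwork.isNetwork {X : Type*} [TopologicalSpace X] {𝒩 : Set (Set X)}
    (h : IsCsStarNetwork 𝒩) : IsNetwork 𝒩 := by
  intro x U hU hx
  obtain ⟨N, hN, hNU, hinf⟩ := h x (fun _ => x) tendsto_const_nhds U hU hx
  obtain ⟨n, hn⟩ := hinf.nonempty
  exact ⟨N, hN, hn, hNU⟩

/-- A compact T2 space with a countable network is second countable. -/
theorem secondCountable_of_countable_network {Y : Type*} [TopologicalSpace Y] [CompactSpace Y]
    [T2Space Y] (𝒩 : Set (Set Y)) (hc : 𝒩.Countable) (hn : IsNetwork 𝒩) :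
    SecondCountableTopology Y := by
  set 𝒞 : Set (Set Y) := closure '' 𝒩 with h𝒞
  have hcC : 𝒞.Countable := hc.image _
  have hCclosed : ∀ C ∈ 𝒞, IsClosed C := by
    rintro C ⟨N, -, rfl⟩; exact isClosed_closure
  have hCnet : ∀ (y : Y) (V : Set Y), IsOpen V → y ∈ V → ∃ C ∈ 𝒞, y ∈ C ∧ C ⊆ V := by
    intro y V hV hy
    obtain ⟨t, ht, htc, htV⟩ := exists_mem_nhds_isClosed_subset (hV.mem_nhds hy)
    obtain ⟨N, hN, hyN, hNt⟩ := hn y (interior t) isOpen_interior (mem_interior_iff_mem_nhds.2 ht)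
    refine ⟨closure N, ⟨N, hN, rfl⟩, subset_closure hyN, ?_⟩
    exact (closure_minimal (hNt.trans interior_subset) htc).trans htV
  set P : Set (Set Y × Set Y) := {p | p.1 ∈ 𝒞 ∧ p.2 ∈ 𝒞 ∧ Disjoint p.1 p.2} with hP
  have hPc : P.Countable := (hcC.prod hcC).mono (by rintro p ⟨h1, h2, -⟩; exact ⟨h1, h2⟩)
  haveI := hPc.to_subtype
  have key : ∀ p : P, ∃ uv : Set Y × Set Y, IsOpen uv.1 ∧ IsOpen uv.2 ∧
      p.1.1 ⊆ uv.1 ∧ p.1.2 ⊆ uv.2 ∧ Disjoint uv.1 uv.2 := by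
    rintro ⟨⟨C, D⟩, hC, hD, hCD⟩
    obtain ⟨u, v, hu, hv, hCu, hDv, huv⟩ :=
      SeparatedNhds.of_isCompact_isCompact ((hCclosed C hC).isCompact)
        ((hCclosed D hD).isCompact) hCD
    exact ⟨(u, v), hu, hv, hCu, hDv, huv⟩
  choose f hf1 hf2 hf3 hf4 hf5 using key
  set S : Set (Set Y) := range (fun p => (f p).1) ∪ range (fun p => (f p).2) with hS
  have hSc : S.Countable := (countable_range _).union (countable_range _)
  have hSopen : ∀ u ∈ S, IsOpen u := by
    rintro u (⟨p, rfl⟩ | ⟨p, rfl⟩); exacts [hf1 p, hf2 p]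
  set B : Set (Set Y) := (fun g => ⋂₀ g) '' {g | g.Finite ∧ g ⊆ S} with hB
  have hBc : B.Countable := (countable_setOf_finite_subset hSc).image _
  refine IsTopologicalBasis.secondCountableTopology (b := B) ?_ hBc
  refine isTopologicalBasis_of_isOpen_of_nhds ?_ ?_
  · rintro u ⟨g, ⟨hgf, hgS⟩, rfl⟩
    exact hgf.isOpen_sInter (fun v hv => hSopen v (hgS hv))
  · intro y W hyW hW
    set Z := Wᶜ with hZ
    have hZcomp : IsCompact Z := (hW.isClosed_compl).isCompact
    have step : ∀ z : Z, ∃ p : P, (z : Y) ∈ (f p).2 ∧ y ∈ (f p).1 := by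
      rintro ⟨z, hz⟩
      have hyz : y ≠ z := fun hh => hz (hh ▸ hyW)
      obtain ⟨Oy, Oz, hOy, hOz, hyOy, hzOz, hdis⟩ := t2_separation hyz
      obtain ⟨C, hC, hyC, hCOy⟩ := hCnet y Oy hOy hyOy
      obtain ⟨D, hD, hzD, hDOz⟩ := hCnet z Oz hOz hzOz
      have hpP : (C, D) ∈ P := ⟨hC, hD, hdis.mono hCOy hDOz⟩
      exact ⟨⟨(C, D), hpP⟩, hf4 _ hzD, hf3 _ hyC⟩
    choose g hg1 hg2 using step
    have hcover : Z ⊆ ⋃ z : Z, (f (g z)).2 := fun z hz =>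
      mem_iUnion.2 ⟨⟨z, hz⟩, hg1 ⟨z, hz⟩⟩
    obtain ⟨t, ht⟩ := hZcomp.elim_finite_subcover (fun z : Z => (f (g z)).2)
      (fun z => hf2 _) hcover
    refine ⟨⋂₀ ((fun z : Z => (f (g z)).1) '' ↑t), ⟨_, ⟨(t.finite_toSet).image _,
      ?_⟩, rfl⟩, ?_, ?_⟩
    · rintro u ⟨z, -, rfl⟩; exact Or.inl ⟨g z, rfl⟩
    · rintro u ⟨z, -, rfl⟩; exact hg2 z
    · intro w hw
      by_contra hwW
      obtain ⟨z, hzt, hwz⟩ := mem_iUnion₂.1 (ht (show w ∈ Z from hwW))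
      have hw1 : w ∈ (f (g z)).1 := hw _ ⟨z, Finset.mem_coe.2 hzt, rfl⟩
      exact (hf5 (g z)).le_bot ⟨hw1, hwz⟩

/-- Every countable cs*-network in a Hausdorff space is a k-network. -/
theorem countable_csStarNetwork_isKNetwork {X : Type*} [TopologicalSpace X] [T2Space X]
    (𝒩 : Set (Set X)) (hc : 𝒩.Countable) (h : IsCsStarNetwork 𝒩) :
    IsKNetwork 𝒩 := by
  intro U K hU hK hKU
  have hn : IsNetwork 𝒩 := h.isNetwork
  rcases K.eq_empty_or_nonempty with hKe | ⟨x₀, hx₀⟩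
  · exact ⟨∅, empty_subset _, finite_empty, by simp [hKe], by simp⟩
  -- the members of 𝒩 inside U
  set M : Set (Set X) := {N ∈ 𝒩 | N ⊆ U} with hM
  have hMc : M.Countable := hc.mono (sep_subset _ _)
  have hMne : M.Nonempty := by
    obtain ⟨N, hN, -, hNU⟩ := hn x₀ U hU (hKU hx₀)
    exact ⟨N, hN, hNU⟩
  obtain ⟨e, he⟩ := hMc.exists_eq_range hMne
  -- it suffices to find a finite subfamily of M covering K
  suffices hsuf : ∃ F, F ⊆ M ∧ F.Finite ∧ K ⊆ ⋃₀ F by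
    obtain ⟨F, hFM, hFf, hKF⟩ := hsuf
    refine ⟨F, fun N hN => (hFM hN).1, hFf, hKF, ?_⟩
    rintro x ⟨N, hN, hxN⟩
    exact (hFM hN).2 hxN
  by_contra hcon
  push_neg at hcon
  -- choose points avoiding larger and larger finite unions
  have hx : ∀ n : ℕ, ∃ x ∈ K, ∀ i ≤ n, x ∉ e i := by
    intro n
    have hF : (e '' Iic n) ⊆ M := by
      rintro N ⟨i, -, rfl⟩; rw [he]; exact mem_range_self i
    have := hcon (e '' Iic n) hF ((finite_Iic n).image e)
    rw [not_subset] at this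
    obtain ⟨x, hxK, hxF⟩ := this
    refine ⟨x, hxK, fun i hi hxi => hxF ⟨e i, ⟨i, hi, rfl⟩, hxi⟩⟩
  choose x hxK hxe using hx
  -- compact subsets are sequentially compact since they are second countable
  haveI : CompactSpace K := isCompact_iff_compactSpace.mp hK
  have hnK : IsNetwork ((fun N => (Subtype.val : K → X) ⁻¹' N) '' 𝒩) := by
    intro y V hV hy
    obtain ⟨W, hW, rfl⟩ := isOpen_induced_iff.mp hV
    obtain ⟨N, hN, hyN, hNW⟩ := hn y.1 W hW hy
    exact ⟨_, ⟨N, hN, rfl⟩, hyN, fun z hz => hNW hz⟩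
  haveI := secondCountable_of_countable_network _ (hc.image _) hnK
  obtain ⟨a, φ, hφ, hconv⟩ := CompactSpace.tendsto_subseq (X := K) (fun n => ⟨x n, hxK n⟩)
  have hconvX : Tendsto (fun n => x (φ n)) atTop (𝓝 (a : X)) :=
    (continuous_subtype_val.tendsto a).comp hconv
  obtain ⟨N, hN, hNU, hinf⟩ := h a.1 _ hconvX U hU (hKU a.2)
  have hNM : N ∈ M := ⟨hN, hNU⟩
  obtain ⟨i, hi⟩ : ∃ i, e i = N := by rw [he] at hNM; exact hNM
  obtain ⟨n, hn', hni⟩ := hinf.exists_gt i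
  have : x (φ n) ∉ e i := hxe (φ n) i (le_trans hni.le (hφ.le_apply))
  rw [hi] at this
  exact this hn'
end

section
/- Every countable Pytkeev network in a topological space X is a k-network for X. -/
/-!
Fix `K ⊆ U` and enumerate the members `N₀, N₁, …` of the network lying inside `U`. If no finite
union of them covered `K`, pick `xₙ ∈ K` outside `N₀ ∪ ⋯ ∪ Nₙ`. Each `Nₖ` contains `xₙ` only for
`n < k`; as the `Nₖ` cover `K`, the points `xₙ` are infinitely many, so by compactness they
accumulate at some point of `K`, and the Pytkeev property yields some `Nₖ` containing infinitely
many of them — a contradiction.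
-/

open Set Filter Topology TopologicalSpace

theorem exists_subset_biUnion_Iic_of_infinite_inter {α : Type*} {K : Set α} (f : ℕ → Set α)
    (hcov : K ⊆ ⋃ n, f n) (hinf : ∀ A ⊆ K, A.Infinite → ∃ n, (f n ∩ A).Infinite) :
    ∃ n, K ⊆ ⋃ i ≤ n, f i := by
  by_contra! hK
  choose x hxK hxf using fun n ↦ not_subset.1 (hK n)
  have hpre : ∀ k, (x ⁻¹' f k).Finite := fun k ↦ (finite_Iio k).subset fun n hn ↦
    mem_Iio.2 <| lt_of_not_ge fun hkn ↦ hxf n (mem_biUnion hkn hn)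
  have hrange : (range x).Infinite := by
    intro hfin
    obtain ⟨I, hI, hxI⟩ := finite_subset_iUnion hfin ((range_subset_iff.2 hxK).trans hcov)
    refine infinite_univ ((hI.biUnion fun k _ ↦ hpre k).subset fun n _ ↦ ?_)
    simpa using hxI (mem_range_self n)
  obtain ⟨k, hk⟩ := hinf (range x) (range_subset_iff.2 hxK) hrange
  exact hk (by simpa only [image_preimage_eq_inter_range] using (hpre k).image x)

theorem Set.Countable.exists_finite_subset_sUnion_of_infinite_inter {α : Type*} {K : Set α}
    {𝒞 : Set (Set α)} (hc : 𝒞.Countable) (hcov : K ⊆ ⋃₀ 𝒞)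
    (hinf : ∀ A ⊆ K, A.Infinite → ∃ C ∈ 𝒞, (C ∩ A).Infinite) :
    ∃ F ⊆ 𝒞, F.Finite ∧ K ⊆ ⋃₀ F := by
  rcases 𝒞.eq_empty_or_nonempty with rfl | hne
  · exact ⟨∅, empty_subset _, finite_empty, by simpa using hcov⟩
  obtain ⟨f, rfl⟩ := hc.exists_eq_range hne
  obtain ⟨n, hn⟩ := exists_subset_biUnion_Iic_of_infinite_inter (K := K) f
    (by rwa [sUnion_range] at hcov) fun A hAK hA ↦ by simpa using hinf A hAK hA
  exact ⟨f '' Iic n, image_subset_range _ _, (finite_Iic n).image f, by rwa [sUnion_image]⟩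

section Topology

variable {X : Type*} [TopologicalSpace X]

theorem AccumulatesAt.of_clusterPt {A : Set X} {x : X} (hx : ClusterPt x (cofinite ⊓ 𝓟 A)) :
    AccumulatesAt A x := by
  intro U hU hfin
  have hmem : (U ∩ A)ᶜ ∩ A ∈ cofinite ⊓ 𝓟 A :=
    inter_mem_inf hfin.compl_mem_cofinite (mem_principal_self A)
  obtain ⟨y, hyU, hyA, hyA'⟩ := clusterPt_iff_nonempty.mp hx hU hmem
  exact hyA ⟨hyU, hyA'⟩

theorem IsCompact.exists_accumulatesAt {K A : Set X} (hK : IsCompact K) (hAK : A ⊆ K)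
    (hA : A.Infinite) : ∃ x ∈ K, AccumulatesAt A x :=
  (@hK _ hA.cofinite_inf_principal_neBot (inf_le_right.trans (principal_mono.2 hAK))).imp
    fun _ ⟨hxK, hx⟩ ↦ ⟨hxK, .of_clusterPt hx⟩

theorem IsNetwork.subset_sUnion_subset {𝒩 : Set (Set X)} (h : IsNetwork 𝒩) {U : Set X}
    (hU : IsOpen U) : U ⊆ ⋃₀ {N ∈ 𝒩 | N ⊆ U} := fun x hx ↦
  let ⟨N, hN, hxN, hNU⟩ := h x U hU hx
  ⟨N, ⟨hN, hNU⟩, hxN⟩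

theorem IsPytkeevNetwork.exists_subset_infinite_inter {𝒩 : Set (Set X)} (h : IsPytkeevNetwork 𝒩)
    {U K A : Set X} (hU : IsOpen U) (hK : IsCompact K) (hKU : K ⊆ U) (hAK : A ⊆ K)
    (hA : A.Infinite) : ∃ N ∈ 𝒩, N ⊆ U ∧ (N ∩ A).Infinite :=
  let ⟨z, hzK, hz⟩ := hK.exists_accumulatesAt hAK hA
  h.2 z U hU (hKU hzK) A hz

end Topology

/-- Every countable Pytkeev network in a topological space is a k-network. -/
theorem countable_pytkeevNetwork_isKNetwork {X : Type*} [TopologicalSpace X]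
    (𝒩 : Set (Set X)) (hc : 𝒩.Countable) (h : IsPytkeevNetwork 𝒩) :
    IsKNetwork 𝒩 := by
  intro U K hU hK hKU
  obtain ⟨F, hF, hFfin, hKF⟩ :=
    (hc.mono (sep_subset 𝒩 (· ⊆ U))).exists_finite_subset_sUnion_of_infinite_inter
      (hKU.trans (h.1.subset_sUnion_subset hU)) fun A hAK hA ↦
        let ⟨N, hN, hNU, hNA⟩ := h.exists_subset_infinite_inter hU hK hKU hAK hA
        ⟨N, ⟨hN, hNU⟩, hNA⟩
  exact ⟨F, hF.trans (sep_subset _ _), hFfin, hKF, sUnion_subset fun N hN ↦ (hF hN).2⟩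
end

section
/- If N is a Pytkeev network for a topological space X, then the family {N ∪ M : N, M ∈ 𝒩} is a strict Pytkeev network for X. -/
open Set Filter Topology TopologicalSpace

/-- `𝒩` is a strict Pytkeev network: the witnessing set moreover contains the point. -/
def IsStrictPytkeevNetwork {X : Type*} [TopologicalSpace X] (𝒩 : Set (Set X)) : Prop :=
  IsNetwork 𝒩 ∧ ∀ (x : X) (U : Set X), IsOpen U → x ∈ U →
    ∀ A : Set X, AccumulatesAt A x → ∃ N ∈ 𝒩, x ∈ N ∧ N ⊆ U ∧ (N ∩ A).Infinite

/-- For any Pytkeev network `𝒩`, the family of pairwise unions of members of `𝒩`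
is a strict Pytkeev network. -/
theorem union_family_isStrictPytkeevNetwork {X : Type*} [TopologicalSpace X]
    (𝒩 : Set (Set X)) (h : IsPytkeevNetwork 𝒩) :
    IsStrictPytkeevNetwork {S : Set X | ∃ N ∈ 𝒩, ∃ M ∈ 𝒩, S = N ∪ M} := by
  obtain ⟨hnet, hpyt⟩ := h
  constructor
  · intro x U hU hx
    obtain ⟨N, hN, hxN, hNU⟩ := hnet x U hU hx
    exact ⟨N ∪ N, ⟨N, hN, N, hN, rfl⟩, Or.inl hxN, union_subset hNU hNU⟩
  · intro x U hU hx A hA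
    obtain ⟨N, hN, hNU, hNA⟩ := hpyt x U hU hx A hA
    obtain ⟨M, hM, hxM, hMU⟩ := hnet x U hU hx
    refine ⟨N ∪ M, ⟨N, hN, M, hM, rfl⟩, Or.inr hxM, union_subset hNU hMU, ?_⟩
    exact hNA.mono (inter_subset_inter_left A subset_union_left)
end

section
/- Every cs*-network in a sequential topological space X is a Pytkeev network for X. -/
open Set Filter Topology TopologicalSpace

/-- Every cs*-network in a sequential space is a Pytkeev network. -/
theorem csStarNetwork_isPytkeevNetwork_of_sequential {X : Type*} [TopologicalSpace X]
    [SequentialSpace X] (𝒩 : Set (Set X)) (h : IsCsStarNetwork 𝒩) :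
    IsPytkeevNetwork 𝒩 := by
  classical
  constructor
  · -- network property via constant sequences
    intro x U hU hxU
    obtain ⟨N, hN, hNU, hinf⟩ := h x (fun _ => x) tendsto_const_nhds U hU hxU
    obtain ⟨n, hn⟩ := hinf.nonempty
    exact ⟨N, hN, hn, hNU⟩
  · intro x U hU hxU A hA
    set B : Set X := {b | b ∈ U ∩ A ∧ b ≠ x ∧ x ∉ closure {b}} with hBdef
    by_cases hcl : x ∈ closure B
    · -- Case 2 : use sequentiality
      set Y : Set X := {y | y ∈ U ∧ y ∉ B ∧ ∃ a ∈ B, y ∈ closure {a}} with hYdef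
      set C : Set X := (B ∪ Uᶜ) ∪ Y with hCdef
      have hxC : x ∉ C := by
        rintro ((hx | hx) | hx)
        · exact hx.2.1 rfl
        · exact hx hxU
        · obtain ⟨-, -, a, haB, hxa⟩ := hx
          exact haB.2.2 hxa
      have hCnotClosed : ¬ IsClosed C := by
        intro hclosed
        exact hxC (hclosed.closure_subset
          (closure_mono (subset_union_left.trans subset_union_left) hcl))
      have hCnotSeq : ¬ IsSeqClosed C := fun hs => hCnotClosed hs.isClosed
      rw [IsSeqClosed] at hCnotSeq
      push_neg at hCnotSeq
      obtain ⟨c, z, hcC, hcz, hzC⟩ := hCnotSeq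
      have hzU : z ∈ U := by
        by_contra hz
        exact hzC (Or.inl (Or.inr hz))
      have hzB : z ∉ B := fun hz => hzC (Or.inl (Or.inl hz))
      have key : ∀ n, c n ∈ U → ∃ a, a ∈ B ∧ c n ∈ closure {a} := by
        intro n hn
        rcases hcC n with ((hb | hu) | hy)
        · exact ⟨c n, hb, subset_closure rfl⟩
        · exact absurd hn hu
        · obtain ⟨-, -, a, haB, hya⟩ := hy
          exact ⟨a, haB, hya⟩
      set b : ℕ → X := fun n =>
        if hn : ∃ a, a ∈ B ∧ c n ∈ closure {a} then hn.choose else x with hbdef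
      have hbspec : ∀ n, c n ∈ U → b n ∈ B ∧ c n ∈ closure {b n} := by
        intro n hn
        have hex := key n hn
        simp only [hbdef, dif_pos hex]
        exact hex.choose_spec
      have hbz : Tendsto b atTop (𝓝 z) := by
        rw [tendsto_nhds]
        intro W hW hzW
        have hev : ∀ᶠ n in atTop, c n ∈ W ∩ U :=
          hcz ((hW.inter hU).mem_nhds ⟨hzW, hzU⟩)
        refine hev.mono fun n hn => ?_
        obtain ⟨hbB, hclb⟩ := hbspec n hn.2
        obtain ⟨w, hwW, hwb⟩ := mem_closure_iff.1 hclb W hW hn.1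
        rw [mem_singleton_iff] at hwb
        exact hwb ▸ hwW
      have hfib : ∀ a : X, a ∈ B → ¬ ({n | b n = a}).Infinite := by
        intro a haB hinf
        have hza : z ∈ closure {a} := by
          rw [mem_closure_iff]
          intro W hW hzW
          have hev : ∀ᶠ n in atTop, b n ∈ W := tendsto_nhds.1 hbz W hW hzW
          obtain ⟨n₀, hn₀⟩ := eventually_atTop.1 hev
          obtain ⟨m, hm, hmgt⟩ := hinf.exists_gt n₀
          exact ⟨b m, hn₀ m hmgt.le, by rw [hm]; rfl⟩
        exact hzC (Or.inr ⟨hzU, hzB, a, haB, hza⟩)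
      obtain ⟨N, hN, hNU, hI⟩ := h z b hbz U hU hzU
      refine ⟨N, hN, hNU, ?_⟩
      -- restrict to indices where `c n ∈ U`
      have hevU : ∀ᶠ n in atTop, c n ∈ U := hcz (hU.mem_nhds hzU)
      obtain ⟨n₀, hn₀⟩ := eventually_atTop.1 hevU
      have hbad : ({n : ℕ | ¬ c n ∈ U}).Finite :=
        (finite_Iio n₀).subset fun n hn => by
          by_contra hlt
          exact hn (hn₀ n (not_lt.1 fun hl => hlt (mem_Iio.2 hl)))
      set J : Set ℕ := {n | b n ∈ N} \ {n | ¬ c n ∈ U} with hJdef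
      have hJinf : J.Infinite := hI.diff hbad
      have hJsub : b '' J ⊆ N ∩ A := by
        rintro _ ⟨n, hn, rfl⟩
        have hcU : c n ∈ U := not_not.1 hn.2
        exact ⟨hn.1, ((hbspec n hcU).1).1.2⟩
      have himg : (b '' J).Infinite := by
        by_contra hfin
        rw [not_infinite] at hfin
        have hJfin : J.Finite := by
          have hsub : J ⊆ ⋃ a ∈ b '' J, {n | b n = a} := by
            intro n hn
            exact mem_biUnion ⟨n, hn, rfl⟩ rfl
          refine Finite.subset (hfin.biUnion fun a ha => ?_) hsub
          obtain ⟨m, hm, rfl⟩ := ha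
          have hcU : c m ∈ U := not_not.1 hm.2
          have haB : b m ∈ B := (hbspec m hcU).1
          by_contra hinf
          exact hfib (b m) haB hinf
        exact hJinf hJfin
      exact himg.mono hJsub
    · -- Case 1 : a whole neighborhood of points specializing to x
      rw [mem_closure_iff] at hcl
      push_neg at hcl
      obtain ⟨V, hV, hxV, hVB⟩ := hcl
      have hVU : V ∩ U ∈ 𝓝 x := (hV.inter hU).mem_nhds ⟨hxV, hxU⟩
      have hS : (((V ∩ U) ∩ A) \ {x}).Infinite :=
        (hA (V ∩ U) hVU).diff (finite_singleton x)
      have hSspec : ∀ s ∈ ((V ∩ U) ∩ A) \ {x}, x ∈ closure {s} := by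
        intro s hs
        by_contra hxs
        have hsB : s ∈ B := ⟨⟨hs.1.1.2, hs.1.2⟩, fun he => hs.2 (he ▸ rfl), hxs⟩
        exact (Set.eq_empty_iff_forall_notMem.mp hVB) s ⟨hs.1.1.1, hsB⟩
      set f := hS.natEmbedding with hfdef
      set u : ℕ → X := fun n => (f n : X) with hudef
      have huinj : Function.Injective u := fun m n hmn =>
        f.injective (Subtype.ext hmn)
      have huS : ∀ n, u n ∈ ((V ∩ U) ∩ A) \ {x} := fun n => (f n).2
      have hux : Tendsto u atTop (𝓝 x) := by
        rw [tendsto_nhds]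
        intro W hW hxW
        refine Eventually.of_forall fun n => ?_
        obtain ⟨w, hwW, hwu⟩ := mem_closure_iff.1 (hSspec (u n) (huS n)) W hW hxW
        rw [mem_singleton_iff] at hwu
        exact hwu ▸ hwW
      obtain ⟨N, hN, hNU, hinf⟩ := h x u hux U hU hxU
      refine ⟨N, hN, hNU, ?_⟩
      have hsub : u '' {n | u n ∈ N} ⊆ N ∩ A := by
        rintro _ ⟨n, hn, rfl⟩
        exact ⟨hn, (huS n).1.2⟩
      exact (hinf.image (huinj.injOn)).mono hsub
end

section
/- A topological space X is separable and metrizable if and only if X is regular, has a countable Pytkeev network, and has countable fan open-tightness. -/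
/-!
A separable metrizable space is second countable, and a countable base is a Pytkeev network;
first countability gives countable fan open-tightness by picking one point of `A n` in the
`n`-th basic neighbourhood.

Conversely, in a regular space the closures of a Pytkeev network form a Pytkeev network, so
assume its members closed. Given `x ∈ U`, enumerate the members `f 0, f 1, …` lying in `U` and
put `B n = f 0 ∪ ⋯ ∪ f n`. If `x` were in the interior of no `B n`, fan open-tightness applied
to the open sets `(B n)ᶜ` would give finite sets `F n ⊆ (B n)ᶜ` whose union accumulates at `x`
(as `x ∈ f m` lies in no `F n` with `n ≥ m`). The Pytkeev property then yields some `f k`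
meeting this union in infinitely many points, although `f k` misses every `F n` with `n ≥ k`.
Hence the interiors of finite unions of members form a countable base, and Urysohn's
metrization theorem finishes the proof.
-/

open Set Filter Topology TopologicalSpace

/-- `X` has countable fan open-tightness. -/
def CountableFanOpenTightness (X : Type*) [TopologicalSpace X] : Prop :=
  ∀ (x : X) (A : ℕ → Set X), (∀ n, IsOpen (A n)) → (∀ n, x ∈ closure (A n)) →
    ∃ F : ℕ → Set X, (∀ n, F n ⊆ A n) ∧ (∀ n, (F n).Finite) ∧
      ∀ U ∈ 𝓝 x, {n : ℕ | (F n ∩ U).Nonempty}.Infinite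

section

variable {X : Type*} [TopologicalSpace X]

lemma TopologicalSpace.IsTopologicalBasis.isPytkeevNetwork {B : Set (Set X)}
    (hB : IsTopologicalBasis B) : IsPytkeevNetwork B := by
  refine ⟨fun x U hU hx => hB.exists_subset_of_mem_open hx hU, fun x U hU hx A hA => ?_⟩
  obtain ⟨V, hV, hxV, hVU⟩ := hB.exists_subset_of_mem_open hx hU
  exact ⟨V, hV, hVU, hA V ((hB.isOpen hV).mem_nhds hxV)⟩

lemma countableFanOpenTightness_of_firstCountableTopology [FirstCountableTopology X] :
    CountableFanOpenTightness X := by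
  intro x A _ hA
  obtain ⟨u, hu⟩ := (𝓝 x).exists_antitone_basis
  choose a ha using fun n => mem_closure_iff_nhds.1 (hA n) (u n) (hu.mem n)
  have ha_lim : Tendsto a atTop (𝓝 x) := hu.tendsto fun n => (ha n).1
  refine ⟨fun n => {a n}, fun n => singleton_subset_iff.2 (ha n).2,
    fun n => finite_singleton _, fun U hU => ?_⟩
  simpa only [singleton_inter_nonempty] using
    Nat.frequently_atTop_iff_infinite.1 (ha_lim.eventually_mem hU).frequently

lemma IsPytkeevNetwork.image_closure [RegularSpace X] {𝒩 : Set (Set X)}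
    (h : IsPytkeevNetwork 𝒩) : IsPytkeevNetwork (closure '' 𝒩) := by
  have shrink : ∀ {x : X} {U : Set X}, IsOpen U → x ∈ U →
      ∃ V, (x ∈ V ∧ IsOpen V) ∧ closure V ⊆ U :=
    fun hU hx => (hasBasis_opens_closure _).mem_iff.1 (hU.mem_nhds hx)
  refine ⟨fun x U hU hx => ?_, fun x U hU hx A hA => ?_⟩
  · obtain ⟨V, ⟨hxV, hV⟩, hVU⟩ := shrink hU hx
    obtain ⟨N, hN, hxN, hNV⟩ := h.1 x V hV hxV
    exact ⟨closure N, mem_image_of_mem _ hN, subset_closure hxN, (closure_mono hNV).trans hVU⟩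
  · obtain ⟨V, ⟨hxV, hV⟩, hVU⟩ := shrink hU hx
    obtain ⟨N, hN, hNV, hNA⟩ := h.2 x V hV hxV A hA
    exact ⟨closure N, mem_image_of_mem _ hN, (closure_mono hNV).trans hVU,
      hNA.mono (inter_subset_inter_left _ subset_closure)⟩

lemma accumulatesAt_iUnion [T1Space X] {ι : Type*} {F : ι → Set X} {x : X}
    (hx : {i | x ∈ F i}.Finite) (hF : ∀ U ∈ 𝓝 x, {i | (F i ∩ U).Nonempty}.Infinite) :
    AccumulatesAt (⋃ i, F i) x := by
  intro U hU hUF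
  set S := (U ∩ ⋃ i, F i) \ {x}
  have hS : Sᶜ ∈ 𝓝 x := (hUF.subset sdiff_subset).isClosed.compl_mem_nhds fun h => h.2 rfl
  refine hF _ (inter_mem hU hS) (hx.subset ?_)
  rintro i ⟨p, hpi, hpU, hpS⟩
  have hpx : p = x := by_contra fun hpx => hpS ⟨⟨hpU, mem_iUnion.2 ⟨i, hpi⟩⟩, hpx⟩
  exact hpx ▸ hpi

lemma exists_mem_interior_biUnion_le [T1Space X] (hfan : CountableFanOpenTightness X)
    {f : ℕ → Set X} (hf : ∀ k, IsClosed (f k)) {x : X} {m : ℕ} (hxm : x ∈ f m)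
    (hacc : ∀ A, AccumulatesAt A x → ∃ k, (f k ∩ A).Infinite) :
    ∃ n, x ∈ interior (⋃ k ≤ n, f k) := by
  by_contra! hx
  set B : ℕ → Set X := fun n => ⋃ k ≤ n, f k
  have hB_closed (n : ℕ) : IsClosed (B n) := (finite_le_nat n).isClosed_biUnion fun k _ => hf k
  have hf_B {k n : ℕ} (hkn : k ≤ n) : f k ⊆ B n := subset_biUnion_of_mem (u := f) hkn
  obtain ⟨F, hFB, hF_fin, hF_meet⟩ := hfan x (fun n => (B n)ᶜ)
    (fun n => (hB_closed n).isOpen_compl) (fun n => by rw [closure_compl]; exact hx n)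
  have hF_disj {k n : ℕ} (hkn : k ≤ n) {p : X} (hpk : p ∈ f k) : p ∉ F n :=
    fun hpn => hFB n hpn (hf_B hkn hpk)
  have hx_F : {n | x ∈ F n}.Finite :=
    (finite_lt_nat m).subset fun n hn => lt_of_not_ge fun hmn => hF_disj hmn hxm hn
  obtain ⟨k, hk⟩ := hacc _ (accumulatesAt_iUnion hx_F hF_meet)
  refine hk (((finite_lt_nat k).biUnion fun n _ => hF_fin n).subset ?_)
  rintro p ⟨hpk, hp⟩
  obtain ⟨n, hpn⟩ := mem_iUnion.1 hp
  exact mem_biUnion (lt_of_not_ge fun hkn => hF_disj hkn hpk hpn) hpn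

lemma IsPytkeevNetwork.exists_finite_subset_mem_interior_sUnion [T1Space X]
    {𝒩 : Set (Set X)} (h : IsPytkeevNetwork 𝒩) (hc : 𝒩.Countable) (hcl : ∀ N ∈ 𝒩, IsClosed N)
    (hfan : CountableFanOpenTightness X) {x : X} {U : Set X} (hU : IsOpen U) (hx : x ∈ U) :
    ∃ F ⊆ 𝒩, F.Finite ∧ ⋃₀ F ⊆ U ∧ x ∈ interior (⋃₀ F) := by
  obtain ⟨N₀, hN₀, hxN₀, hN₀U⟩ := h.1 x U hU hx
  obtain ⟨f, hf⟩ := (hc.mono (sep_subset 𝒩 (· ⊆ U))).exists_eq_range ⟨N₀, hN₀, hN₀U⟩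
  have hf_range (N : Set X) : N ∈ 𝒩 ∧ N ⊆ U ↔ N ∈ range f := Set.ext_iff.1 hf N
  have hf_mem (k : ℕ) : f k ∈ 𝒩 ∧ f k ⊆ U := (hf_range _).2 (mem_range_self k)
  obtain ⟨m, rfl⟩ := (hf_range N₀).1 ⟨hN₀, hN₀U⟩
  have hacc (A : Set X) (hA : AccumulatesAt A x) : ∃ k, (f k ∩ A).Infinite := by
    obtain ⟨N, hN, hNU, hNA⟩ := h.2 x U hU hx A hA
    obtain ⟨k, rfl⟩ := (hf_range N).1 ⟨hN, hNU⟩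
    exact ⟨k, hNA⟩
  obtain ⟨n, hn⟩ := exists_mem_interior_biUnion_le hfan (fun k => hcl _ (hf_mem k).1) hxN₀ hacc
  refine ⟨f '' Iic n, image_subset_iff.2 fun k _ => (hf_mem k).1, (finite_Iic n).image f, ?_, ?_⟩
  · exact sUnion_image f _ ▸ iUnion₂_subset fun k _ => (hf_mem k).2
  · exact sUnion_image f _ ▸ hn

lemma secondCountableTopology_of_exists_finite_subset_mem_interior_sUnion
    {𝒩 : Set (Set X)} (hc : 𝒩.Countable)
    (h : ∀ (x : X) (U : Set X), IsOpen U → x ∈ U →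
      ∃ F ⊆ 𝒩, F.Finite ∧ ⋃₀ F ⊆ U ∧ x ∈ interior (⋃₀ F)) :
    SecondCountableTopology X := by
  refine IsTopologicalBasis.secondCountableTopology (b := (interior ∘ sUnion) ''
    {F | F.Finite ∧ F ⊆ 𝒩}) ?_ ((countable_ofPred_finite_subset hc).image _)
  refine isTopologicalBasis_of_isOpen_of_nhds ?_ fun x U hxU hU => ?_
  · rintro _ ⟨F, _, rfl⟩
    exact isOpen_interior
  · obtain ⟨F, hF𝒩, hF_fin, hFU, hxF⟩ := h x U hU hxU
    exact ⟨_, ⟨F, ⟨hF_fin, hF𝒩⟩, rfl⟩, hxF, interior_subset.trans hFU⟩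

lemma IsPytkeevNetwork.secondCountableTopology [RegularSpace X] [T1Space X]
    {𝒩 : Set (Set X)} (h : IsPytkeevNetwork 𝒩) (hc : 𝒩.Countable)
    (hfan : CountableFanOpenTightness X) : SecondCountableTopology X :=
  secondCountableTopology_of_exists_finite_subset_mem_interior_sUnion (hc.image closure)
    fun _ _ hU hx => h.image_closure.exists_finite_subset_mem_interior_sUnion (hc.image closure)
      (forall_mem_image.2 fun _ _ => isClosed_closure) hfan hU hx

end

/-- A space is separable and metrizable iff it is regular, has a countable Pytkeev
network and has countable fan open-tightness. -/
theorem separable_metrizable_iff_pytkeev_fanOpenTightness (X : Type*) [TopologicalSpace X] :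
    (SeparableSpace X ∧ MetrizableSpace X) ↔
      (T3Space X ∧ (∃ 𝒩 : Set (Set X), 𝒩.Countable ∧ IsPytkeevNetwork 𝒩) ∧
        CountableFanOpenTightness X) := by
  constructor
  · rintro ⟨_, _⟩
    let := metrizableSpaceMetric X
    have := UniformSpace.secondCountable_of_separable X
    exact ⟨inferInstance, ⟨countableBasis X, countable_countableBasis X,
      (isBasis_countableBasis X).isPytkeevNetwork⟩,
      countableFanOpenTightness_of_firstCountableTopology⟩
  · rintro ⟨_, ⟨𝒩, hc, h𝒩⟩, hfan⟩
    have := h𝒩.secondCountableTopology hc hfan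
    exact ⟨inferInstance, metrizableSpace_of_t3_secondCountable X⟩
end

section
/- If a T₁ topological space X carries the inductive (final) topology with respect to a countable cover 𝒞 of X by subspaces each possessing a countable Pytkeev network, then X has a countable Pytkeev network. -/
/-!
Push the networks of the pieces forward into `X`. If `A` accumulates at `x ∈ U` but no pushed
member inside `U` meets `A` in an infinite set, then on every piece the trace of
`S = (A ∩ U) \ {x}` accumulates at no point of `U`, so (the pieces being `T₁`) the trace of
`U \ S` is open in every piece. By the inductive topology `U \ S` is then an open neighbourhood
of `x` meeting `A` in at most `x`, a contradiction.
-/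

open Set Filter Topology TopologicalSpace

theorem isOpen_diff_of_forall_not_accumulatesAt {X : Type*} [TopologicalSpace X] [T1Space X]
    {U S : Set X} (hU : IsOpen U) (hS : ∀ p ∈ U \ S, ¬ AccumulatesAt S p) : IsOpen (U \ S) := by
  refine isOpen_iff_mem_nhds.2 fun p hp => ?_
  obtain ⟨V, hV, hVS⟩ : ∃ V ∈ 𝓝 p, (V ∩ S).Finite := by
    simpa [AccumulatesAt] using hS p hp
  have hcompl : (V ∩ S)ᶜ ∈ 𝓝 p := hVS.isClosed.compl_mem_nhds fun h => hp.2 h.2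
  filter_upwards [hV, hU.mem_nhds hp.1, hcompl] with q hqV hqU hq
  exact ⟨hqU, fun hqS => hq ⟨hqV, hqS⟩⟩

section PushforwardNetwork

variable {X ι : Type*} {C : ι → Set X}

def pushforwardNetwork (C : ι → Set X) (𝒩 : ∀ i, Set (Set (C i))) : Set (Set X) :=
  ⋃ i, (Subtype.val '' ·) '' 𝒩 i

variable {𝒩 : ∀ i, Set (Set (C i))}

theorem image_val_mem_pushforwardNetwork {i : ι} {M : Set (C i)} (hM : M ∈ 𝒩 i) :
    Subtype.val '' M ∈ pushforwardNetwork C 𝒩 :=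
  mem_iUnion.2 ⟨i, mem_image_of_mem _ hM⟩

theorem pushforwardNetwork_countable [Countable ι] (h𝒩 : ∀ i, (𝒩 i).Countable) :
    (pushforwardNetwork C 𝒩).Countable :=
  countable_iUnion fun i => (h𝒩 i).image _

variable [TopologicalSpace X]

theorem isNetwork_pushforwardNetwork (hcover : ⋃ i, C i = univ) (h𝒩 : ∀ i, IsNetwork (𝒩 i)) :
    IsNetwork (pushforwardNetwork C 𝒩) := by
  intro x U hU hxU
  obtain ⟨i, hxC⟩ := mem_iUnion.1 (hcover.symm ▸ mem_univ x)
  obtain ⟨M, hM, hxM, hMU⟩ :=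
    h𝒩 i ⟨x, hxC⟩ _ (hU.preimage continuous_subtype_val) hxU
  exact ⟨_, image_val_mem_pushforwardNetwork hM, ⟨_, hxM, rfl⟩, image_subset_iff.2 hMU⟩

theorem exists_mem_pushforwardNetwork_subset_infinite_inter [T1Space X]
    (hind : ∀ U : Set X, (∀ i, IsOpen (Subtype.val ⁻¹' U : Set (C i))) → IsOpen U)
    (h𝒩 : ∀ i, IsPytkeevNetwork (𝒩 i)) {x : X} {U A : Set X} (hU : IsOpen U) (hxU : x ∈ U)
    (hA : AccumulatesAt A x) :
    ∃ N ∈ pushforwardNetwork C 𝒩, N ⊆ U ∧ (N ∩ A).Infinite := by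
  by_contra! hfin
  set S := (A ∩ U) \ {x}
  have hopen : IsOpen (U \ S) := hind _ fun i => by
    have hUi : IsOpen (Subtype.val ⁻¹' U : Set (C i)) := hU.preimage continuous_subtype_val
    refine isOpen_diff_of_forall_not_accumulatesAt hUi fun p hp hpS => ?_
    obtain ⟨M, hM, hMU, hMS⟩ := (h𝒩 i).2 p _ hUi hp.1 _ hpS
    have hMA : Subtype.val '' (M ∩ Subtype.val ⁻¹' S) ⊆ Subtype.val '' M ∩ A := by
      rw [image_inter_preimage]
      exact inter_subset_inter_right _ fun y hy => hy.1.1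
    exact (hfin _ (image_val_mem_pushforwardNetwork hM) (image_subset_iff.2 hMU)).not_infinite
      ((hMS.image Subtype.val_injective.injOn).mono hMA)
  refine hA _ (hopen.mem_nhds ⟨hxU, fun h => h.2 rfl⟩) ((finite_singleton x).subset ?_)
  rintro y ⟨⟨hyU, hyS⟩, hyA⟩
  by_contra hyx
  exact hyS ⟨⟨hyA, hyU⟩, hyx⟩

theorem isPytkeevNetwork_pushforwardNetwork [T1Space X] (hcover : ⋃ i, C i = univ)
    (hind : ∀ U : Set X, (∀ i, IsOpen (Subtype.val ⁻¹' U : Set (C i))) → IsOpen U)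
    (h𝒩 : ∀ i, IsPytkeevNetwork (𝒩 i)) : IsPytkeevNetwork (pushforwardNetwork C 𝒩) :=
  ⟨isNetwork_pushforwardNetwork hcover fun i => (h𝒩 i).1,
    fun _ _ hU hxU _ hA => exists_mem_pushforwardNetwork_subset_infinite_inter hind h𝒩 hU hxU hA⟩

end PushforwardNetwork

/-- If a `T₁` space carries the inductive topology with respect to a countable cover by
subspaces with countable Pytkeev networks, then it has a countable Pytkeev network. -/
theorem pytkeevNetwork_of_inductive_topology {X : Type*} [TopologicalSpace X] [T1Space X]
    (𝒞 : Set (Set X)) (hcount : 𝒞.Countable) (hcover : ⋃₀ 𝒞 = univ)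
    (hind : ∀ U : Set X, IsOpen U ↔ ∀ C ∈ 𝒞, IsOpen ((Subtype.val ⁻¹' U : Set ↥C)))
    (h𝒞 : ∀ C ∈ 𝒞, ∃ 𝒩 : Set (Set ↥C), 𝒩.Countable ∧ IsPytkeevNetwork 𝒩) :
    ∃ 𝒩 : Set (Set X), 𝒩.Countable ∧ IsPytkeevNetwork 𝒩 := by
  choose 𝒩 hcountable hpytkeev using fun C : 𝒞 => h𝒞 C C.2
  have := hcount.to_subtype
  refine ⟨pushforwardNetwork (fun C : 𝒞 => (C : Set X)) 𝒩,
    pushforwardNetwork_countable hcountable, isPytkeevNetwork_pushforwardNetwork ?_ ?_ hpytkeev⟩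
  · rwa [sUnion_eq_iUnion] at hcover
  · exact fun U hU => (hind U).2 fun C hC => hU ⟨C, hC⟩
end

section
/- If spaces X_n (n ∈ ℕ) each have a countable Pytkeev network, then the countable product ∏_n X_n (with the product topology) has a countable Pytkeev network. -/
open Set Filter Topology TopologicalSpace

/-! Finite boxes `⋂_{i ∈ I} π_i⁻¹ N_i`, with `N_i` from the factor networks, form a countable
network of the product. For the Pytkeev property fix a basic neighbourhood `∏_{i ∈ I} O_i` of `x`,
enumerate each factor network, and let the rank of a point `a` be the largest, over `i ∈ I`, of the
index of the first network element containing `a_i` inside `O_i`. If every box inside the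
neighbourhood met `A` in a finite set, then only finitely many points of `A` would have rank
`≤ m`, for each `m`. Hence, for each `i ∈ I`, the `i`-th coordinates of the points whose rank is
attained at `i` cannot accumulate at `x_i`: a network element of index `k` meeting them
infinitely often would capture infinitely many points of rank `≤ k`. So some neighbourhood `W_i`
meets them finitely, and `∏_{i ∈ I} (O_i ∩ W_i)` then contains only points of bounded rank,
hence only finitely many points of `A`, although `A` accumulates at `x`. -/

section Capture

variable {α : Type*}

/-- The index of the first `e k` with `y ∈ e k ⊆ O`; it is `0` if there is none. -/
noncomputable def captureRank (e : ℕ → Set α) (O : Set α) (y : α) : ℕ :=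
  sInf {k | y ∈ e k ∧ e k ⊆ O}

theorem captureRank_spec [TopologicalSpace α] {e : ℕ → Set α} (he : IsNetwork (range e))
    {O : Set α} (hO : IsOpen O) {y : α} (hy : y ∈ O) :
    y ∈ e (captureRank e O y) ∧ e (captureRank e O y) ⊆ O := by
  obtain ⟨_, ⟨k, rfl⟩, hyk, hkO⟩ := he y O hO hy
  exact Nat.sInf_mem (s := {k | y ∈ e k ∧ e k ⊆ O}) ⟨k, hyk, hkO⟩

theorem captureRank_le {e : ℕ → Set α} {O : Set α} {y : α} {k : ℕ} (hyk : y ∈ e k)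
    (hkO : e k ⊆ O) : captureRank e O y ≤ k :=
  Nat.sInf_le ⟨hyk, hkO⟩

theorem IsNetwork.nonempty [TopologicalSpace α] {𝒩 : Set (Set α)} (h : IsNetwork 𝒩) (x : α) :
    𝒩.Nonempty := by
  obtain ⟨N, hN, -⟩ := h x univ isOpen_univ (mem_univ x)
  exact ⟨N, hN⟩

end Capture

section Product

variable {ι : Type*} {X : ι → Type*}

def boxNetwork (𝒩 : ∀ i, Set (Set (X i))) : Set (Set (∀ i, X i)) :=
  sInter '' {F | F.Finite ∧ F ⊆ ⋃ i, preimage (Function.eval i) '' 𝒩 i}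

theorem countable_boxNetwork [Countable ι] {𝒩 : ∀ i, Set (Set (X i))}
    (hc : ∀ i, (𝒩 i).Countable) : (boxNetwork 𝒩).Countable :=
  (countable_ofPred_finite_subset (countable_iUnion fun i => (hc i).image _)).image _

theorem pi_mem_boxNetwork {𝒩 : ∀ i, Set (Set (X i))} (I : Finset ι) {N : ∀ i, Set (X i)}
    (hN : ∀ i ∈ I, N i ∈ 𝒩 i) : (I : Set ι).pi N ∈ boxNetwork 𝒩 := by
  refine ⟨(fun i => Function.eval i ⁻¹' N i) '' I, ⟨I.finite_toSet.image _, ?_⟩, ?_⟩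
  · rintro _ ⟨i, hi, rfl⟩
    exact mem_iUnion.2 ⟨i, N i, hN i hi, rfl⟩
  · rw [sInter_image, pi_def]

noncomputable def boxRank (e : ∀ i, ℕ → Set (X i)) (I : Finset ι) (O : ∀ i, Set (X i))
    (a : ∀ i, X i) : ℕ :=
  I.sup fun j => captureRank (e j) (O j) (a j)

variable [∀ i, TopologicalSpace (X i)]

theorem IsNetwork.pi {𝒩 : ∀ i, Set (Set (X i))} (h : ∀ i, IsNetwork (𝒩 i)) :
    IsNetwork (boxNetwork 𝒩) := by
  intro x U hU hxU
  obtain ⟨I, O, hO, hOU⟩ := isOpen_pi_iff.1 hU x hxU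
  choose! N hN hxN hNO using fun i (hi : i ∈ I) => h i (x i) (O i) (hO i hi).1 (hO i hi).2
  exact ⟨_, pi_mem_boxNetwork I hN, hxN, (pi_mono hNO).trans hOU⟩

variable {e : ∀ i, ℕ → Set (X i)} {I : Finset ι} {O : ∀ i, Set (X i)}

/-- Points of bounded rank lie in finitely many boxes of the network. -/
theorem finite_setOf_boxRank_le (he : ∀ i, IsNetwork (range (e i)))
    (hO : ∀ i ∈ I, IsOpen (O i)) {A : Set (∀ i, X i)}
    (hfin : ∀ B ∈ boxNetwork fun i => range (e i), B ⊆ (I : Set ι).pi O → (B ∩ A).Finite)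
    (m : ℕ) : {a ∈ A ∩ (I : Set ι).pi O | boxRank e I O a ≤ m}.Finite := by
  set C := (fun p : ι × ℕ => Function.eval p.1 ⁻¹' e p.1 p.2) '' (↑I ×ˢ Iic m)
  have hC : C.Finite := (I.finite_toSet.prod (finite_Iic m)).image _
  have hfam : {F | F ⊆ C ∧ ⋂₀ F ⊆ (I : Set ι).pi O}.Finite :=
    hC.finite_subsets.subset fun F hF => hF.1
  refine (hfam.biUnion fun F hF => hfin _
    ⟨F, ⟨hC.subset hF.1, hF.1.trans ?_⟩, rfl⟩ hF.2).subset ?_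
  · rintro _ ⟨p, -, rfl⟩
    exact mem_iUnion.2 ⟨p.1, e p.1 p.2, mem_range_self _, rfl⟩
  rintro a ⟨⟨haA, haO⟩, ham⟩
  have hcap j (hj : j ∈ I) := captureRank_spec (he j) (hO j hj) (haO j hj)
  refine mem_iUnion₂.2 ⟨(fun j => Function.eval j ⁻¹' e j (captureRank (e j) (O j) (a j))) '' I,
    ⟨?_, ?_⟩, ?_, haA⟩
  · rintro _ ⟨j, hj, rfl⟩
    exact ⟨(j, _),
      ⟨hj, (Finset.le_sup (f := fun j => captureRank (e j) (O j) (a j)) hj).trans ham⟩, rfl⟩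
  · rw [sInter_image, ← pi_def]
    exact pi_mono fun j hj => (hcap j hj).2
  · rw [sInter_image, ← pi_def]
    exact fun j hj => (hcap j hj).1

theorem not_accumulatesAt_eval_image_boxRank_eq
    (he : ∀ i, IsPytkeevNetwork (range (e i))) (hO : ∀ i ∈ I, IsOpen (O i)) {A : Set (∀ i, X i)}
    (hfin : ∀ B ∈ boxNetwork fun i => range (e i), B ⊆ (I : Set ι).pi O → (B ∩ A).Finite)
    {x : ∀ i, X i} (hx : x ∈ (I : Set ι).pi O) {i : ι} (hi : i ∈ I) :
    ¬AccumulatesAt (Function.eval i ''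
      {a ∈ A ∩ (I : Set ι).pi O | boxRank e I O a = captureRank (e i) (O i) (a i)}) (x i) := by
  intro hacc
  obtain ⟨_, ⟨k, rfl⟩, hkO, hk⟩ := (he i).2 (x i) (O i) (hO i hi) (hx i hi) _ hacc
  refine hk (((finite_setOf_boxRank_le (fun j => (he j).1) hO hfin k).image
    (Function.eval i)).subset ?_)
  rintro _ ⟨hyk, a, ⟨ha, hrank⟩, rfl⟩
  exact ⟨a, ⟨ha, hrank.trans_le (captureRank_le hyk hkO)⟩, rfl⟩

theorem exists_box_subset_inter_infinite
    (he : ∀ i, IsPytkeevNetwork (range (e i))) (hO : ∀ i ∈ I, IsOpen (O i)) {x : ∀ i, X i}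
    (hx : x ∈ (I : Set ι).pi O) {A : Set (∀ i, X i)} (hA : AccumulatesAt A x) :
    ∃ B ∈ boxNetwork fun i => range (e i), B ⊆ (I : Set ι).pi O ∧ (B ∩ A).Infinite := by
  by_contra! hfin
  have hW i (hi : i ∈ I) := not_accumulatesAt_eval_image_boxRank_eq he hO hfin hx hi
  simp only [AccumulatesAt, not_forall, Set.not_infinite, exists_prop] at hW
  choose! W hW hWfin using hW
  obtain ⟨m, hm⟩ := (I.finite_toSet.biUnion fun i hi => (hWfin i hi).image
    (captureRank (e i) (O i))).bddAbove
  refine hA _ (inter_mem (set_pi_mem_nhds I.finite_toSet hW)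
    ((isOpen_set_pi I.finite_toSet hO).mem_nhds hx))
    ((finite_setOf_boxRank_le (fun j => (he j).1) hO hfin m).subset ?_)
  rintro a ⟨⟨haW, haO⟩, haA⟩
  refine ⟨⟨haA, haO⟩, ?_⟩
  rcases I.eq_empty_or_nonempty with rfl | hI
  · simp [boxRank]
  obtain ⟨i, hi, hai⟩ := I.exists_mem_eq_sup hI fun j => captureRank (e j) (O j) (a j)
  rw [boxRank, hai]
  exact hm (mem_iUnion₂.2 ⟨i, hi, a i, ⟨haW i hi, a, ⟨⟨haA, haO⟩, hai⟩, rfl⟩, rfl⟩)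

theorem IsPytkeevNetwork.pi {𝒩 : ∀ i, Set (Set (X i))}
    (hc : ∀ i, (𝒩 i).Countable) (h : ∀ i, IsPytkeevNetwork (𝒩 i)) :
    IsPytkeevNetwork (boxNetwork 𝒩) := by
  refine ⟨IsNetwork.pi fun i => (h i).1, fun x U hU hxU A hA => ?_⟩
  choose e he using fun i => (hc i).exists_eq_range ((h i).1.nonempty (x i))
  obtain rfl : 𝒩 = fun i => range (e i) := funext he
  obtain ⟨I, O, hO, hOU⟩ := isOpen_pi_iff.1 hU x hxU
  obtain ⟨B, hB, hBO, hBA⟩ :=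
    exists_box_subset_inter_infinite h (fun i hi => (hO i hi).1) (fun i hi => (hO i hi).2) hA
  exact ⟨B, hB, hBO.trans hOU, hBA⟩

end Product

/-- If each space `X n` has a countable Pytkeev network, then the countable Tychonoff
product `Π n, X n` has a countable Pytkeev network. -/
theorem pi_countable_pytkeevNetwork {X : ℕ → Type*} [∀ n, TopologicalSpace (X n)]
    (h : ∀ n, ∃ 𝒩 : Set (Set (X n)), 𝒩.Countable ∧ IsPytkeevNetwork 𝒩) :
    ∃ 𝒩 : Set (Set (Π n, X n)), 𝒩.Countable ∧ IsPytkeevNetwork 𝒩 := by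
  choose 𝒩 hc hp using h
  exact ⟨boxNetwork 𝒩, countable_boxNetwork hc, IsPytkeevNetwork.pi hc hp⟩
end

section
/- For any separable metrizable spaces X and Y, the space C_k(X,Y) of continuous maps with the compact-open topology has a countable Pytkeev network. -/
open Set Filter Topology TopologicalSpace

/-!
Fix a countable base `B` of `X` and a countable dense `D ⊆ Y`. The network consists of the sets
`{g | g(V) ⊆ ball y r for all (V, y) ∈ t}` with `t ⊆ B ×ˢ D` finite and `r` rational; a cover of a
compact `K` by such pairs, adapted to `f`, gives members of the network inside any basic
neighbourhood `{g | dist (f x) (g x) < δ on K}` of `f`.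

The Pytkeev property reduces to: if `A` accumulates at `f` and `K` is compact, then infinitely
many `g ∈ A` are `ε`-close to `f` on one fixed neighbourhood of `K`. Otherwise, along a decreasing
countable neighbourhood base `Uₙ` of `K`, only finitely many `g ∈ A` stay `ε`-close to `f` on
`Uₙ`. Picking for every other `g` a point of deviation in `Uₙ₋₁`, where `n` is the first index
with `g` close on `Uₙ`, gives points accumulating only at `K`; together with `K` they form a
compact set `C`, and the neighbourhood of `f` defined by `C` and `ε` meets `A` in a finite set.
-/

open Metric Uniformity

section NhdsSet

variable {X : Type*} [TopologicalSpace X]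

theorem IsCompact.isCountablyGenerated_nhdsSet [PseudoMetrizableSpace X] {K : Set X}
    (hK : IsCompact K) : (𝓝ˢ K).IsCountablyGenerated := by
  let := pseudoMetrizableSpaceUniformity X
  have := pseudoMetrizableSpaceUniformity_countably_generated X
  obtain ⟨V, hV⟩ := (𝓤 X).exists_antitone_basis
  exact (hK.nhdsSet_basis_uniformity hV.toHasBasis).isCountablyGenerated

theorem IsCompact.union_of_forall_nhdsSet_diff_finite {K S : Set X} (hK : IsCompact K)
    (hS : ∀ U ∈ 𝓝ˢ K, (S \ U).Finite) : IsCompact (K ∪ S) := by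
  classical
  refine isCompact_of_finite_subcover fun U hUo hcover => ?_
  obtain ⟨t₀, ht₀⟩ := hK.elim_finite_subcover U hUo (subset_union_left.trans hcover)
  have hW : ⋃ i ∈ t₀, U i ∈ 𝓝ˢ K := (isOpen_biUnion fun i _ => hUo i).mem_nhdsSet.2 ht₀
  obtain ⟨t₁, ht₁⟩ := (hS _ hW).isCompact.elim_finite_subcover U hUo
    (sdiff_subset.trans (subset_union_right.trans hcover))
  refine ⟨t₀ ∪ t₁, fun x hx => ?_⟩
  rw [Finset.set_biUnion_union]
  by_cases hxW : x ∈ ⋃ i ∈ t₀, U i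
  · exact Or.inl hxW
  · exact Or.inr (ht₁ ⟨hx.resolve_left fun hxK => hxW (ht₀ hxK), hxW⟩)

theorem IsCompact.exists_isCompact_setOf_disjoint_finite {ι : Type*} {K : Set X}
    (hK : IsCompact K) [(𝓝ˢ K).IsCountablyGenerated] {s : Set ι} {Z : ι → Set X}
    (hZ : ∀ i, IsClosed (Z i)) (hfin : ∀ U ∈ 𝓝ˢ K, {i ∈ s | Disjoint (Z i) U}.Finite) :
    ∃ C, IsCompact C ∧ {i ∈ s | Disjoint (Z i) C}.Finite := by
  classical
  obtain ⟨U, hU⟩ := (𝓝ˢ K).exists_antitone_basis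
  set T : ℕ → Set ι := fun n => {i ∈ s | Disjoint (Z i) (U n)}
  have hT_mono : Monotone T := fun m n hmn i hi =>
    ⟨hi.1, hi.2.mono_right (hU.antitone hmn)⟩
  have h_exists : ∀ i ∈ s, Disjoint (Z i) K → ∃ n, i ∈ T n := fun i hi hiK => by
    obtain ⟨n, hn⟩ := hU.mem_iff.1 ((hZ i).isOpen_compl.mem_nhdsSet.2 hiK.subset_compl_left)
    exact ⟨n, hi, disjoint_compl_right.mono_right hn⟩
  set E := {i ∈ s | Disjoint (Z i) K ∧ i ∉ T 0}
  have h_witness : ∀ i : E, ∃ z ∈ Z i, ∀ n, z ∉ U n → i.1 ∈ T n := by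
    rintro ⟨i, hi, hiK, hi0⟩
    have hex := h_exists i hi hiK
    obtain ⟨k, hk⟩ := Nat.exists_eq_succ_of_ne_zero fun h => hi0 (h ▸ Nat.find_spec hex)
    have hik : i ∉ T k := Nat.find_min hex (by omega)
    obtain ⟨z, hzZ, hzU⟩ := not_disjoint_iff.1 fun h => hik ⟨hi, h⟩
    refine ⟨z, hzZ, fun n hzn => hT_mono ?_ (hk ▸ Nat.find_spec hex)⟩
    by_contra! hnk
    exact hzn (hU.antitone (by omega) hzU)
  choose z hzZ hzU using h_witness
  refine ⟨K ∪ range z, hK.union_of_forall_nhdsSet_diff_finite fun V hV => ?_,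
    (hfin _ (hU.mem 0)).subset ?_⟩
  · obtain ⟨n, hn⟩ := hU.mem_iff.1 hV
    refine (((hfin _ (hU.mem n)).preimage Subtype.val_injective.injOn).image z).subset ?_
    rintro _ ⟨⟨i, rfl⟩, hzV⟩
    exact ⟨i, hzU i n fun h => hzV (hn h), rfl⟩
  · rintro i ⟨hi, hiC⟩
    by_contra hi0
    have hiK : Disjoint (Z i) K := hiC.mono_right subset_union_left
    exact hiC.ne_of_mem (hzZ ⟨i, hi, hiK, hi0⟩) (subset_union_right ⟨⟨i, hi, hiK, hi0⟩, rfl⟩) rfl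

end NhdsSet

namespace ContinuousMap

variable {X Y : Type*} [TopologicalSpace X] [PseudoMetricSpace Y]

theorem hasBasis_nhds_dist (f : C(X, Y)) :
    (𝓝 f).HasBasis (fun p : Set X × ℝ => IsCompact p.1 ∧ 0 < p.2)
      fun p => {g | ∀ x ∈ p.1, dist (f x) (g x) < p.2} :=
  nhds_basis_uniformity' uniformity_basis_dist.compactConvergenceUniformity

theorem _root_.AccumulatesAt.exists_mem_nhdsSet_infinite_dist_lt {A : Set C(X, Y)}
    {f : C(X, Y)} (hA : AccumulatesAt A f) {K : Set X} (hK : IsCompact K)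
    [(𝓝ˢ K).IsCountablyGenerated] {ε : ℝ} (hε : 0 < ε) :
    ∃ U ∈ 𝓝ˢ K, {g ∈ A | ∀ x ∈ U, dist (f x) (g x) < ε}.Infinite := by
  by_contra! hfin
  set Z : C(X, Y) → Set X := fun g => {x | ε ≤ dist (f x) (g x)}
  have hZ : ∀ g, IsClosed (Z g) := fun g =>
    isClosed_le continuous_const (f.continuous.dist g.continuous)
  have h_disj : ∀ g U, Disjoint (Z g) U ↔ ∀ x ∈ U, dist (f x) (g x) < ε := by
    simp [Set.disjoint_right, Z]
  obtain ⟨C, hC, hCfin⟩ := hK.exists_isCompact_setOf_disjoint_finite (s := A) hZ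
    fun U hU => by simpa only [h_disj] using hfin U hU
  refine hA _ ((hasBasis_nhds_dist f).mem_of_mem (i := (C, ε)) ⟨hC, hε⟩) (hCfin.subset ?_)
  rintro g ⟨hg, hgA⟩
  exact ⟨hgA, (h_disj g C).2 hg⟩

def mapsToBalls (t : Set (Set X × Y)) (r : ℝ) : Set C(X, Y) :=
  {g | ∀ p ∈ t, MapsTo g p.1 (ball p.2 r)}

theorem mem_mapsToBalls_add {t : Set (Set X × Y)} {f g : C(X, Y)} {ε ε' : ℝ}
    (hf : ∀ p ∈ t, MapsTo f p.1 (ball p.2 ε)) (hg : ∀ p ∈ t, ∀ x ∈ p.1, dist (f x) (g x) < ε') :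
    g ∈ mapsToBalls t (ε + ε') := fun p hp x hx =>
  calc dist (g x) p.2 ≤ dist (f x) (g x) + dist (f x) p.2 := dist_triangle_left _ _ _
    _ < ε + ε' := by linarith [hg p hp x hx, mem_ball.1 (hf p hp hx)]

theorem mapsToBalls_subset {t : Set (Set X × Y)} {f : C(X, Y)} {K : Set X} {ε : ℝ}
    (hK : K ⊆ ⋃ p ∈ t, p.1) (hf : ∀ p ∈ t, MapsTo f p.1 (ball p.2 ε)) (r : ℝ) :
    mapsToBalls t r ⊆ {g | ∀ x ∈ K, dist (f x) (g x) < ε + r} := by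
  intro g hg x hx
  obtain ⟨p, hp, hxp⟩ := mem_iUnion₂.1 (hK hx)
  calc dist (f x) (g x) ≤ dist (f x) p.2 + dist (g x) p.2 := dist_triangle_right _ _ _
    _ < ε + r := add_lt_add (hf p hp hxp) (hg p hp hxp)

theorem exists_finite_cover_mapsTo_ball {B : Set (Set X)} (hB : IsTopologicalBasis B)
    {D : Set Y} (hD : Dense D) (f : C(X, Y)) {K U : Set X} (hK : IsCompact K) (hU : IsOpen U)
    (hKU : K ⊆ U) {ε : ℝ} (hε : 0 < ε) :
    ∃ t ⊆ B ×ˢ D, t.Finite ∧ K ⊆ ⋃ p ∈ t, p.1 ∧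
      ∀ p ∈ t, p.1 ⊆ U ∧ MapsTo f p.1 (ball p.2 ε) := by
  set P := {p ∈ B ×ˢ D | p.1 ⊆ U ∧ MapsTo f p.1 (ball p.2 ε)}
  have hcover : K ⊆ ⋃ p ∈ P, p.1 := by
    intro x hx
    obtain ⟨y, hyD, hy⟩ := hD.exists_dist_lt (f x) hε
    have hxW : x ∈ U ∩ f ⁻¹' ball y ε := ⟨hKU hx, mem_ball.2 hy⟩
    obtain ⟨V, hVB, hxV, hVU⟩ :=
      hB.exists_subset_of_mem_open hxW (hU.inter (isOpen_ball.preimage f.continuous))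
    exact mem_biUnion (x := (V, y))
      ⟨⟨hVB, hyD⟩, hVU.trans inter_subset_left, fun x' hx' => (hVU hx').2⟩ hxV
  obtain ⟨t, htP, htfin, hKt⟩ := hK.elim_finite_subcover_image (fun p hp => hB.isOpen hp.1.1)
    hcover
  exact ⟨t, fun p hp => (htP hp).1, htfin, hKt, fun p hp => (htP hp).2⟩

def ballNetwork (B : Set (Set X)) (D : Set Y) : Set (Set C(X, Y)) :=
  (fun q : Set (Set X × Y) × ℚ => mapsToBalls q.1 q.2) '' ({t | t.Finite ∧ t ⊆ B ×ˢ D} ×ˢ univ)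

theorem countable_ballNetwork {B : Set (Set X)} {D : Set Y} (hB : B.Countable)
    (hD : D.Countable) : (ballNetwork B D).Countable :=
  ((countable_ofPred_finite_subset (hB.prod hD)).prod countable_univ).image _

theorem mapsToBalls_mem_ballNetwork {B : Set (Set X)} {D : Set Y} {t : Set (Set X × Y)}
    (ht : t ⊆ B ×ˢ D) (htfin : t.Finite) (r : ℚ) : mapsToBalls t r ∈ ballNetwork B D :=
  ⟨(t, r), ⟨⟨htfin, ht⟩, mem_univ _⟩, rfl⟩

theorem exists_mapsToBalls_subset {B : Set (Set X)} (hB : IsTopologicalBasis B) {D : Set Y}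
    (hD : Dense D) {f : C(X, Y)} {O : Set C(X, Y)} (hO : O ∈ 𝓝 f) :
    ∃ K, IsCompact K ∧ ∃ r : ℚ, 0 < r ∧ ∀ V, IsOpen V → K ⊆ V →
      ∃ N ∈ ballNetwork B D, N ⊆ O ∧
        ∀ g : C(X, Y), (∀ x ∈ V, dist (f x) (g x) < r / 2) → g ∈ N := by
  obtain ⟨⟨K, δ⟩, ⟨hK, hδ⟩, hKO⟩ := (hasBasis_nhds_dist f).mem_iff.1 hO
  obtain ⟨r, hr0, hrδ⟩ := exists_rat_btwn (half_pos hδ)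
  have hr : (0 : ℝ) < r := hr0
  refine ⟨K, hK, r, mod_cast hr0, fun V hV hKV => ?_⟩
  obtain ⟨t, htBD, htfin, hKt, htV⟩ :=
    exists_finite_cover_mapsTo_ball hB hD f hK hV hKV (half_pos hr)
  refine ⟨_, mapsToBalls_mem_ballNetwork htBD htfin r, ?_, fun g hg => ?_⟩
  · refine (mapsToBalls_subset hKt (fun p hp => (htV p hp).2) r).trans fun g hg => hKO ?_
    exact fun x hx => (hg x hx).trans (by linarith)
  · simpa only [add_halves] using
      mem_mapsToBalls_add (fun p hp => (htV p hp).2) fun p hp x hx => hg x ((htV p hp).1 hx)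

theorem isPytkeevNetwork_ballNetwork [PseudoMetrizableSpace X] {B : Set (Set X)}
    (hB : IsTopologicalBasis B) {D : Set Y} (hD : Dense D) :
    IsPytkeevNetwork (ballNetwork B D) := by
  refine ⟨fun f O hO hfO => ?_, fun f O hO hfO A hA => ?_⟩
  · obtain ⟨K, -, r, hr, hN⟩ := exists_mapsToBalls_subset hB hD (hO.mem_nhds hfO)
    obtain ⟨N, hN, hNO, hfN⟩ := hN univ isOpen_univ (subset_univ K)
    exact ⟨N, hN, hfN f fun x _ => by simpa using hr, hNO⟩
  · obtain ⟨K, hK, r, hr, hN⟩ := exists_mapsToBalls_subset hB hD (hO.mem_nhds hfO)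
    have := hK.isCountablyGenerated_nhdsSet
    obtain ⟨U, hU, hinf⟩ := hA.exists_mem_nhdsSet_infinite_dist_lt hK (ε := r / 2) (by positivity)
    obtain ⟨V, hV, hKV, hVU⟩ := mem_nhdsSet_iff_exists.1 hU
    obtain ⟨N, hN, hNO, hgN⟩ := hN V hV hKV
    exact ⟨N, hN, hNO, hinf.mono fun g hg => ⟨hgN g fun x hx => hg.2 x (hVU hx), hg.1⟩⟩

end ContinuousMap

/-- For separable metrizable spaces `X, Y`, the space `C_k(X,Y)` of continuous maps with
the compact-open topology has a countable Pytkeev network. -/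
theorem compactOpen_countable_pytkeevNetwork {X Y : Type*}
    [TopologicalSpace X] [TopologicalSpace Y]
    [SeparableSpace X] [MetrizableSpace X] [SeparableSpace Y] [MetrizableSpace Y] :
    ∃ 𝒩 : Set (Set C(X, Y)), 𝒩.Countable ∧ IsPytkeevNetwork 𝒩 := by
  let := metrizableSpaceMetric Y
  have : SecondCountableTopology X := by
    let := metrizableSpaceMetric X
    exact UniformSpace.secondCountable_of_separable X
  obtain ⟨B, hBc, -, hB⟩ := exists_countable_basis X
  obtain ⟨D, hDc, hD⟩ := exists_countable_dense Y
  exact ⟨_, ContinuousMap.countable_ballNetwork hBc hDc,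
    ContinuousMap.isPytkeevNetwork_ballNetwork hB hD⟩
end

section
/- Let X be a topological group that is a cosmic space (regular with a countable network) and has a countable Pytkeev network at its identity element. Then X has a countable Pytkeev network. -/
open Set Filter Topology TopologicalSpace
open scoped Pointwise

/-- `𝒩` is a network at the point `x`. -/
def IsNetworkAt {X : Type*} [TopologicalSpace X] (𝒩 : Set (Set X)) (x : X) : Prop :=
  ∀ U : Set X, IsOpen U → x ∈ U → ∃ N ∈ 𝒩, x ∈ N ∧ N ⊆ U

/-- `𝒩` is a Pytkeev network at the point `x`. -/
def IsPytkeevNetworkAt {X : Type*} [TopologicalSpace X] (𝒩 : Set (Set X)) (x : X) : Prop :=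
  IsNetworkAt 𝒩 x ∧ ∀ U : Set X, IsOpen U → x ∈ U →
    ∀ A : Set X, AccumulatesAt A x → ∃ N ∈ 𝒩, N ⊆ U ∧ (N ∩ A).Infinite

/-! If `𝒩` is a network of `G` and `P` a Pytkeev network at `1`, then the products `D * N`
(`D ∈ 𝒩`, `N ∈ P`) form a Pytkeev network of `G`: near a point `x`, pick a neighbourhood `V`
of `1` with `x • (V * V) ⊆ U`, a member `D ⊆ x • V` of `𝒩` containing `x`, and a member
`N ⊆ V` of `P` witnessing the Pytkeev property at `1` for the translate `x⁻¹ • A`; then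
`D * N ⊆ U`, and `D * N ⊇ x • N` meets `A` in infinitely many points. -/

theorem AccumulatesAt.smul {G X : Type*} [Group G] [TopologicalSpace X] [MulAction G X]
    [ContinuousConstSMul G X] {A : Set X} {x : X} (hA : AccumulatesAt A x) (g : G) :
    AccumulatesAt (g • A) (g • x) := by
  intro U hU
  have hU' : g⁻¹ • U ∈ 𝓝 x := by
    rwa [← smul_mem_nhds_smul_iff g, smul_inv_smul]
  have hinf := (infinite_smul_set (a := g)).mpr (hA _ hU')
  rwa [smul_set_inter, smul_inv_smul] at hinf

theorem Set.Infinite.mul_inter_of_inter_inv_smul {G : Type*} [Group G] {D N A : Set G} {x : G}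
    (hN : (N ∩ x⁻¹ • A).Infinite) (hx : x ∈ D) : (D * N ∩ A).Infinite := by
  have hinf := (infinite_smul_set (a := x)).mpr hN
  rw [smul_set_inter, smul_inv_smul] at hinf
  exact hinf.mono (inter_subset_inter_left A (smul_set_subset_mul hx))

section TopologicalGroup

variable {G : Type*} [Group G] [TopologicalSpace G] [IsTopologicalGroup G]

theorem exists_open_nhds_one_smul_mul_subset {x : G} {U : Set G} (hU : U ∈ 𝓝 x) :
    ∃ V : Set G, IsOpen V ∧ 1 ∈ V ∧ x • (V * V) ⊆ U := by
  have hU' : x⁻¹ • U ∈ 𝓝 (1 : G) := by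
    rwa [← inv_mul_cancel x, ← smul_eq_mul, smul_mem_nhds_smul_iff]
  obtain ⟨V, hVo, hV1, hVV⟩ := exists_open_nhds_one_mul_subset hU'
  exact ⟨V, hVo, hV1, by simpa using smul_set_mono hVV (a := x)⟩

theorem IsNetwork.exists_open_nhds_one_forall_mul_subset {𝒩 : Set (Set G)}
    (h𝒩 : IsNetwork 𝒩) {x : G} {U : Set G} (hU : IsOpen U) (hx : x ∈ U) :
    ∃ V : Set G, IsOpen V ∧ 1 ∈ V ∧ ∀ N ⊆ V, ∃ D ∈ 𝒩, x ∈ D ∧ D * N ⊆ U := by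
  obtain ⟨V, hVo, hV1, hVU⟩ := exists_open_nhds_one_smul_mul_subset (hU.mem_nhds hx)
  refine ⟨V, hVo, hV1, fun N hNV => ?_⟩
  have hxV : x ∈ x • V := by simpa using smul_mem_smul_set hV1 (a := x)
  obtain ⟨D, hD, hxD, hDV⟩ := h𝒩 x (x • V) (hVo.smul x) hxV
  refine ⟨D, hD, hxD, ?_⟩
  calc D * N ⊆ x • V * V := mul_subset_mul hDV hNV
    _ = x • (V * V) := smul_mul_assoc x V V
    _ ⊆ U := hVU

theorem IsNetwork.isPytkeevNetwork_mul {𝒩 P : Set (Set G)} (h𝒩 : IsNetwork 𝒩)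
    (hP : IsPytkeevNetworkAt P 1) : IsPytkeevNetwork (𝒩 * P) := by
  constructor
  · intro x U hU hx
    obtain ⟨V, hVo, hV1, hV⟩ := h𝒩.exists_open_nhds_one_forall_mul_subset hU hx
    obtain ⟨N, hN, h1N, hNV⟩ := hP.1 V hVo hV1
    obtain ⟨D, hD, hxD, hDN⟩ := hV N hNV
    exact ⟨D * N, mul_mem_mul hD hN, by simpa using mul_mem_mul hxD h1N, hDN⟩
  · intro x U hU hx A hA
    obtain ⟨V, hVo, hV1, hV⟩ := h𝒩.exists_open_nhds_one_forall_mul_subset hU hx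
    obtain ⟨N, hN, hNV, hNA⟩ := hP.2 V hVo hV1 (x⁻¹ • A) (by simpa using hA.smul x⁻¹)
    obtain ⟨D, hD, hxD, hDN⟩ := hV N hNV
    exact ⟨D * N, mul_mem_mul hD hN, hDN, hNA.mul_inter_of_inter_inv_smul hxD⟩

end TopologicalGroup

theorem cosmicGroup_countable_pytkeevNetwork_general {G : Type*} [Group G] [TopologicalSpace G]
    [IsTopologicalGroup G]
    (hnet : ∃ 𝒩 : Set (Set G), 𝒩.Countable ∧ IsNetwork 𝒩)
    (hpyt : ∃ Pnet : Set (Set G), Pnet.Countable ∧ IsPytkeevNetworkAt Pnet (1 : G)) :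
    ∃ 𝒩 : Set (Set G), 𝒩.Countable ∧ IsPytkeevNetwork 𝒩 := by
  obtain ⟨𝒩, h𝒩c, h𝒩⟩ := hnet
  obtain ⟨P, hPc, hP⟩ := hpyt
  exact ⟨𝒩 * P, h𝒩c.image2 hPc _, h𝒩.isPytkeevNetwork_mul hP⟩

/-- A cosmic topological group with a countable Pytkeev network at the identity
has a countable Pytkeev network. -/
theorem cosmicGroup_countable_pytkeevNetwork {G : Type*} [Group G] [TopologicalSpace G]
    [IsTopologicalGroup G] [T3Space G]
    (hnet : ∃ 𝒩 : Set (Set G), 𝒩.Countable ∧ IsNetwork 𝒩)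
    (hpyt : ∃ Pnet : Set (Set G), Pnet.Countable ∧ IsPytkeevNetworkAt Pnet (1 : G)) :
    ∃ 𝒩 : Set (Set G), 𝒩.Countable ∧ IsPytkeevNetwork 𝒩 :=
  cosmicGroup_countable_pytkeevNetwork_general hnet hpyt
end

section
/- Let X be a separable topological group having a countable Pytkeev network at its identity element. Then X has a countable Pytkeev network. -/
open Set Filter Topology TopologicalSpace

/-!
Take the sets `d • (M⁻¹ * N)` with `d` in a countable dense set `D` and `M, N` in the Pytkeev
network `P` at `1`. Given `x`, pick a small `M ∈ P` and `m ∈ M` with `x = d * m⁻¹`, `d ∈ D`: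
if `D` accumulates at `x`, the Pytkeev property applied to `x⁻¹ • D` provides them, and
otherwise `x` is inseparable from a point of `D` and `m = 1` works. Then `x ∈ d • (M⁻¹ * N)`
when `1 ∈ N`, and the Pytkeev property at `1` applied to `(d * m⁻¹)⁻¹ • A` supplies an `N`
meeting `A` in infinitely many points. In a non-T₀ group `x = d * m⁻¹` holds only up to
inseparability, so each set is replaced by its saturation under inseparability.
-/

open Pointwise SeparationQuotient

theorem AccumulatesAt.preimage_homeomorph {X Y : Type*} [TopologicalSpace X] [TopologicalSpace Y]
    (e : X ≃ₜ Y) {A : Set Y} {x : X} (h : AccumulatesAt A (e x)) :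
    AccumulatesAt (e ⁻¹' A) x := by
  intro U hU
  have hinf : (e '' (U ∩ e ⁻¹' A)).Infinite := by
    rw [image_inter_preimage]
    exact h _ (e.isOpenMap.image_mem_nhds hU)
  exact hinf.of_image e

theorem Inseparable.accumulatesAt_iff {X : Type*} [TopologicalSpace X] {A : Set X} {x y : X}
    (h : Inseparable x y) : AccumulatesAt A x ↔ AccumulatesAt A y := by
  rw [AccumulatesAt, AccumulatesAt, h.nhds_eq]

theorem Dense.exists_inseparable_of_not_accumulatesAt {X : Type*} [TopologicalSpace X]
    [R0Space X] {D : Set X} {x : X} (hD : Dense D) (h : ¬AccumulatesAt D x) :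
    ∃ d ∈ D, Inseparable x d := by
  simp only [AccumulatesAt, not_forall, not_infinite] at h
  obtain ⟨U, hU, hfin⟩ := h
  have hx : x ∈ closure (⋃ d ∈ U ∩ D, {d}) := by
    rw [biUnion_of_singleton, mem_closure_iff_nhds]
    intro t ht
    simpa only [inter_assoc, inter_comm D] using hD.inter_nhds_nonempty (inter_mem ht hU)
  rw [hfin.closure_biUnion, mem_iUnion₂] at hx
  obtain ⟨d, hd, hxd⟩ := hx
  exact ⟨d, hd.2, (specializes_iff_inseparable.1 (specializes_iff_mem_closure.2 hxd)).symm⟩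

theorem Inseparable.smul_subset_of_isOpen {M : Type*} [Mul M] [TopologicalSpace M]
    [ContinuousMul M] {x y : M} (hxy : Inseparable x y) {U W : Set M} (hU : IsOpen U)
    (hW : x • W ⊆ U) : y • W ⊆ U := by
  rintro _ ⟨w, hw, rfl⟩
  exact ((hxy.map (continuous_mul_const w)).mem_open_iff hU).1 (hW (smul_mem_smul_set hw))

theorem mul_inv_smul_subset_smul_inv_mul {G : Type*} [Group G] {M : Set G} {m : G} (hm : m ∈ M)
    (d : G) (N : Set G) :
    (d * m⁻¹) • N ⊆ d • (M⁻¹ * N) := by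
  rw [mul_smul]
  exact smul_set_mono (smul_set_subset_mul (inv_mem_inv.2 hm))

section TopologicalGroup

variable {G : Type*} [Group G] [TopologicalSpace G]

theorem AccumulatesAt.preimage_mul_left [IsTopologicalGroup G] {A : Set G} {x : G}
    (h : AccumulatesAt A x) :
    AccumulatesAt ((x * ·) ⁻¹' A) 1 := by
  rw [← Homeomorph.coe_mulLeft]
  exact AccumulatesAt.preimage_homeomorph (Homeomorph.mulLeft x)
    (by simpa only [Homeomorph.coe_mulLeft, mul_one] using h)

theorem exists_open_nhds_one_mul_inv_mul_subset [IsTopologicalGroup G] {W : Set G}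
    (hW : W ∈ 𝓝 (1 : G)) :
    ∃ V : Set G, IsOpen V ∧ (1 : G) ∈ V ∧ V * V⁻¹ * V ⊆ W := by
  obtain ⟨V₁, hV₁, h1V₁, hV₁W⟩ := exists_open_nhds_one_mul_subset hW
  obtain ⟨V₂, hV₂, hdiv⟩ := exists_nhds_split_inv (hV₁.mem_nhds h1V₁)
  refine ⟨interior (V₁ ∩ V₂), isOpen_interior,
    mem_interior_iff_mem_nhds.2 (inter_mem (hV₁.mem_nhds h1V₁) hV₂), ?_⟩
  rintro _ ⟨_, ⟨a, ha, b, hb, rfl⟩, c, hc, rfl⟩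
  have ha := interior_subset ha
  have hb := interior_subset (mem_inv.1 hb)
  have hc := interior_subset hc
  refine hV₁W (mul_mem_mul ?_ hc.1)
  simpa only [div_eq_mul_inv, inv_inv] using hdiv a ha.2 b⁻¹ hb.2

theorem IsPytkeevNetworkAt.exists_inseparable_mul_inv [IsTopologicalGroup G] {P : Set (Set G)}
    (hP : IsPytkeevNetworkAt P 1) {D : Set G} (hD : Dense D) (x : G) {V : Set G}
    (hV : IsOpen V) (h1V : (1 : G) ∈ V) :
    ∃ d ∈ D, ∃ M ∈ P, M ⊆ V ∧ ∃ m ∈ M, Inseparable x (d * m⁻¹) := by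
  by_cases hacc : AccumulatesAt D x
  · obtain ⟨M, hMP, hMV, hinf⟩ := hP.2 V hV h1V _ hacc.preimage_mul_left
    obtain ⟨m, hmM, hmD⟩ := hinf.nonempty
    exact ⟨x * m, hmD, M, hMP, hMV, m, hmM, by rw [mul_inv_cancel_right]⟩
  · obtain ⟨d, hdD, hxd⟩ := hD.exists_inseparable_of_not_accumulatesAt hacc
    obtain ⟨M, hMP, h1M, hMV⟩ := hP.1 V hV h1V
    exact ⟨d, hdD, M, hMP, hMV, 1, h1M, by rwa [inv_one, mul_one]⟩

def saturatedTranslates (D : Set G) (P : Set (Set G)) : Set (Set G) :=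
  (fun t : G × Set G × Set G => mk ⁻¹' (mk '' (t.1 • (t.2.1⁻¹ * t.2.2)))) '' (D ×ˢ P ×ˢ P)

theorem Set.Countable.saturatedTranslates {D : Set G} {P : Set (Set G)} (hD : D.Countable)
    (hP : P.Countable) : (saturatedTranslates D P).Countable :=
  (hD.prod (hP.prod hP)).image _

theorem mem_saturatedTranslates {D : Set G} {P : Set (Set G)} {d : G} {M N : Set G}
    (hd : d ∈ D) (hM : M ∈ P) (hN : N ∈ P) :
    mk ⁻¹' (mk '' (d • (M⁻¹ * N))) ∈ saturatedTranslates D P :=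
  ⟨(d, M, N), ⟨hd, hM, hN⟩, rfl⟩

theorem IsPytkeevNetworkAt.exists_saturatedTranslate_subset [IsTopologicalGroup G]
    {P : Set (Set G)} (hP : IsPytkeevNetworkAt P 1) {D : Set G} (hD : Dense D) {U : Set G}
    (hU : IsOpen U) {x : G} (hx : x ∈ U) :
    ∃ V : Set G, IsOpen V ∧ (1 : G) ∈ V ∧ ∃ d ∈ D, ∃ M ∈ P, ∃ m ∈ M,
      Inseparable x (d * m⁻¹) ∧ ∀ N ⊆ V, mk ⁻¹' (mk '' (d • (M⁻¹ * N))) ⊆ U := by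
  obtain ⟨V, hV, h1V, hVU⟩ := exists_open_nhds_one_mul_inv_mul_subset
    ((hU.preimage (continuous_const_mul x)).mem_nhds (by simpa using hx))
  obtain ⟨d, hdD, M, hMP, hMV, m, hmM, hxy⟩ := hP.exists_inseparable_mul_inv hD x hV h1V
  refine ⟨V, hV, h1V, d, hdD, M, hMP, m, hmM, hxy, fun N hNV => ?_⟩
  have hsub : d • (M⁻¹ * N) ⊆ (d * m⁻¹) • (V * V⁻¹ * V) := by
    calc d • (M⁻¹ * N) = (d * m⁻¹) • (m • (M⁻¹ * N)) := by rw [smul_smul, inv_mul_cancel_right]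
      _ ⊆ (d * m⁻¹) • (V * (V⁻¹ * V)) := smul_set_mono <| (smul_set_subset_mul (hMV hmM)).trans
        (mul_subset_mul_left (mul_subset_mul (inv_subset_inv.2 hMV) hNV))
      _ = (d * m⁻¹) • (V * V⁻¹ * V) := by rw [mul_assoc]
  have hxU : x • (V * V⁻¹ * V) ⊆ U := smul_set_subset_iff.2 fun w hw => hVU hw
  rw [← preimage_image_mk_open hU]
  exact preimage_mono (image_mono (hsub.trans (hxy.smul_subset_of_isOpen hU hxU)))

theorem IsPytkeevNetworkAt.isPytkeevNetwork_saturatedTranslates [IsTopologicalGroup G]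
    {P : Set (Set G)} (hP : IsPytkeevNetworkAt P 1) {D : Set G} (hD : Dense D) :
    IsPytkeevNetwork (saturatedTranslates D P) := by
  constructor
  · intro x U hU hx
    obtain ⟨V, hV, h1V, d, hdD, M, hMP, m, hmM, hxy, hsub⟩ :=
      hP.exists_saturatedTranslate_subset hD hU hx
    obtain ⟨N, hNP, h1N, hNV⟩ := hP.1 V hV h1V
    have hy : d * m⁻¹ ∈ d • (M⁻¹ * N) := mul_inv_smul_subset_smul_inv_mul hmM d N
      (by simpa using smul_mem_smul_set (a := d * m⁻¹) h1N)
    exact ⟨_, mem_saturatedTranslates hdD hMP hNP, ⟨_, hy, mk_eq_mk.2 hxy.symm⟩, hsub N hNV⟩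
  · intro x U hU hx A hA
    obtain ⟨V, hV, h1V, d, hdD, M, hMP, m, hmM, hxy, hsub⟩ :=
      hP.exists_saturatedTranslate_subset hD hU hx
    set y := d * m⁻¹
    obtain ⟨N, hNP, hNV, hinf⟩ :=
      hP.2 V hV h1V _ (hxy.accumulatesAt_iff.1 hA).preimage_mul_left
    refine ⟨_, mem_saturatedTranslates hdD hMP hNP, hsub N hNV, ?_⟩
    have htranslate : (N ∩ (y * ·) ⁻¹' A).Infinite → (y • N ∩ A).Infinite := fun h => by
      have := h.image (mul_right_injective y).injOn
      rwa [image_inter_preimage] at this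
    refine (htranslate hinf).mono (inter_subset_inter_left _ ?_)
    exact (mul_inv_smul_subset_smul_inv_mul hmM d N).trans (subset_preimage_image _ _)

end TopologicalGroup

/-- A separable topological group with a countable Pytkeev network at the identity
has a countable Pytkeev network. -/
theorem separableGroup_countable_pytkeevNetwork {G : Type*} [Group G] [TopologicalSpace G]
    [IsTopologicalGroup G] [SeparableSpace G]
    (hpyt : ∃ Pnet : Set (Set G), Pnet.Countable ∧ IsPytkeevNetworkAt Pnet (1 : G)) :
    ∃ 𝒩 : Set (Set G), 𝒩.Countable ∧ IsPytkeevNetwork 𝒩 := by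
  obtain ⟨P, hPc, hP⟩ := hpyt
  obtain ⟨D, hDc, hD⟩ := exists_countable_dense G
  exact ⟨saturatedTranslates D P, hDc.saturatedTranslates hPc,
    hP.isPytkeevNetwork_saturatedTranslates hD⟩
end

section
/- For a regular space X with a countable k-network, the function space C_k(X, ℝ) with the compact-open topology has countable fan tightness if and only if it is first countable, if and only if X is hemicompact. -/
open Set Filter Topology TopologicalSpace

/-- `Z` has countable fan tightness. -/
def CountableFanTightness (Z : Type*) [TopologicalSpace Z] : Prop :=
  ∀ (z : Z) (A : ℕ → Set Z), (∀ n, z ∈ closure (A n)) →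
    ∃ F : ℕ → Set Z, (∀ n, F n ⊆ A n) ∧ (∀ n, (F n).Finite) ∧
      ∀ U ∈ 𝓝 z, {n : ℕ | (F n ∩ U).Nonempty}.Infinite

/-- `X` is hemicompact. -/
def Hemicompact (X : Type*) [TopologicalSpace X] : Prop :=
  ∃ K : ℕ → Set X, (∀ n, IsCompact (K n)) ∧ ∀ C : Set X, IsCompact C → ∃ n, C ⊆ K n

section Aux
open scoped Uniformity

lemma net_subcover {X : Type*} [TopologicalSpace X] {𝒩 : Set (Set X)}
    (hc : 𝒩.Countable) (hn : IsNetwork 𝒩) {ι : Type*} (U : ι → Set X)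
    (hU : ∀ i, IsOpen (U i)) (s : Set X) (hs : s ⊆ ⋃ i, U i) :
    ∃ t : Set ι, t.Countable ∧ s ⊆ ⋃ i ∈ t, U i := by
  rcases s.eq_empty_or_nonempty with rfl | ⟨x0, hx0⟩
  · exact ⟨∅, countable_empty, by simp⟩
  · have hι : Nonempty ι := by
      rcases mem_iUnion.1 (hs hx0) with ⟨i, _⟩; exact ⟨i⟩
    classical
    let g : Set X → ι := fun N => if h : ∃ i, N ⊆ U i then h.choose else Classical.arbitrary ι
    refine ⟨g '' {N ∈ 𝒩 | ∃ i, N ⊆ U i}, (hc.mono (sep_subset _ _)).image _, fun x hx => ?_⟩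
    rcases mem_iUnion.1 (hs hx) with ⟨i, hxi⟩
    rcases hn x (U i) (hU i) hxi with ⟨N, hN𝒩, hxN, hNU⟩
    have hN : N ∈ {N ∈ 𝒩 | ∃ i, N ⊆ U i} := ⟨hN𝒩, i, hNU⟩
    refine mem_biUnion (mem_image_of_mem g hN) ?_
    have : ∃ i, N ⊆ U i := ⟨i, hNU⟩
    simpa only [g, dif_pos this] using this.choose_spec hxN

lemma exists_discrete_seq {X : Type u} [TopologicalSpace X] {𝒩 : Set (Set X)}
    (hc : 𝒩.Countable) (hn : IsNetwork 𝒩) {R : Set X} (hRc : IsClosed R)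
    (hR : ¬ IsCompact R) :
    ∃ D : Set X, D ⊆ R ∧ D.Infinite ∧ ∀ z : X, ∃ O, IsOpen O ∧ z ∈ O ∧ (O ∩ D).Finite := by
  classical
  rw [isCompact_iff_finite_subcover] at hR
  push_neg at hR
  obtain ⟨ι, U, hUo, hRU, hnofin⟩ := hR
  obtain ⟨t, htc, htcov⟩ := net_subcover hc hn U hUo R hRU
  have htne : t.Nonempty := by
    rcases t.eq_empty_or_nonempty with rfl | h
    · exfalso
      refine hnofin ∅ ?_
      simpa using htcov
    · exact h
  obtain ⟨j, hj⟩ := (Set.countable_iff_exists_surjective htne).1 htc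
  set W : ℕ → Set X := fun k => ⋃ l ∈ Finset.range (k + 1), U ((j l : ι)) with hW
  have hWo : ∀ k, IsOpen (W k) := fun k => isOpen_biUnion fun l _ => hUo _
  have hWmono : Monotone W := by
    intro a b hab
    intro y hy
    rcases mem_iUnion₂.1 hy with ⟨l, hl, hxl⟩
    exact mem_biUnion (Finset.mem_range.2 (lt_of_lt_of_le (Finset.mem_range.1 hl) (by omega))) hxl
  have hWcov : R ⊆ ⋃ k, W k := by
    intro x hx
    rcases mem_iUnion₂.1 (htcov hx) with ⟨i, hit, hxi⟩
    rcases hj ⟨i, hit⟩ with ⟨l, hl⟩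
    refine mem_iUnion.2 ⟨l, mem_biUnion (Finset.self_mem_range_succ l) ?_⟩
    rw [hl]; exact hxi
  have hWne : ∀ k, (R \ W k).Nonempty := by
    intro k
    rw [Set.diff_nonempty]
    intro hsub
    refine hnofin ((Finset.range (k + 1)).image (fun l => (j l : ι))) ?_
    intro x hx
    rcases mem_iUnion₂.1 (hsub hx) with ⟨l, hl, hxl⟩
    exact mem_biUnion (Finset.mem_image_of_mem _ hl) hxl
  choose x hx using hWne
  have hxR : ∀ k, x k ∈ R := fun k => (hx k).1
  have hxW : ∀ k, x k ∉ W k := fun k => (hx k).2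
  refine ⟨range x, range_subset_iff.2 hxR, ?_, ?_⟩
  · intro hfin
    have : ∀ y ∈ hfin.toFinset, ∃ k, y ∈ W k := by
      intro y hy
      exact mem_iUnion.1 (hWcov (by
        rcases hfin.mem_toFinset.1 hy with ⟨k, rfl⟩; exact hxR k))
    choose! k hk using this
    set N := hfin.toFinset.sup k with hN
    have : x N ∈ W N := by
      have hmem : x N ∈ hfin.toFinset := hfin.mem_toFinset.2 ⟨N, rfl⟩
      exact hWmono (Finset.le_sup hmem) (hk _ hmem)
    exact hxW N this
  · intro z
    by_cases hz : z ∈ R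
    · rcases mem_iUnion.1 (hWcov hz) with ⟨l, hl⟩
      refine ⟨W l, hWo l, hl, ?_⟩
      have : W l ∩ range x ⊆ x '' (Iio l) := by
        rintro _ ⟨hmem, k, rfl⟩
        by_contra hk
        have hlk : l ≤ k := by
          by_contra h
          exact hk ⟨k, mem_Iio.2 (not_le.1 h), rfl⟩
        exact hxW k (hWmono hlk hmem)
      exact (Set.finite_Iio l).image x |>.subset this
    · exact ⟨Rᶜ, hRc.isOpen_compl, hz, by
        have : Rᶜ ∩ range x = ∅ := by
          rw [eq_empty_iff_forall_notMem]
          rintro _ ⟨hc', k, rfl⟩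
          exact hc' (hxR k)
        simp [this]⟩

variable {X : Type*} [TopologicalSpace X]

def Mset (f : C(X, ℝ)) (K : Set X) (ε : ℝ) : Set C(X, ℝ) :=
  {g | ∀ x ∈ K, dist (f x) (g x) < ε}

lemma nhds_basis_M (f : C(X, ℝ)) :
    (𝓝 f).HasBasis (fun p : Set X × Set (ℝ × ℝ) => IsCompact p.1 ∧ p.2 ∈ 𝓤 ℝ)
      (fun p => {g | ∀ x ∈ p.1, (f x, g x) ∈ p.2}) :=
  (nhds_basis_uniformity' ContinuousMap.hasBasis_compactConvergenceUniformity).congr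
    (fun i => Iff.rfl) (fun i _ => rfl)

lemma Mset_mem_nhds (f : C(X, ℝ)) {K : Set X} (hK : IsCompact K) {ε : ℝ} (hε : 0 < ε) :
    Mset f K ε ∈ 𝓝 f := by
  refine (nhds_basis_M f).mem_of_mem (i := (K, {p : ℝ × ℝ | dist p.1 p.2 < ε}))
    ⟨hK, Metric.dist_mem_uniformity hε⟩

lemma exists_Mset_subset {f : C(X, ℝ)} {s : Set C(X, ℝ)} (hs : s ∈ 𝓝 f) :
    ∃ K ε, IsCompact K ∧ 0 < ε ∧ Mset f K ε ⊆ s := by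
  rcases (nhds_basis_M f).mem_iff.1 hs with ⟨⟨K, V⟩, ⟨hK, hV⟩, hsub⟩
  rcases Metric.mem_uniformity_dist.1 hV with ⟨ε, hε, hεV⟩
  exact ⟨K, ε, hK, hε, fun g hg => hsub fun x hx => hεV (hg x hx)⟩

lemma cft_of_fc {Z : Type*} [TopologicalSpace Z] (h : FirstCountableTopology Z) :
    CountableFanTightness Z := by
  intro z A hA
  haveI := h
  obtain ⟨B, hB⟩ := (𝓝 z).exists_antitone_basis
  have hne : ∀ n, (B n ∩ A n).Nonempty := fun n =>
    mem_closure_iff_nhds.1 (hA n) _ (hB.mem n)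
  choose x hx using hne
  refine ⟨fun n => {x n}, fun n => singleton_subset_iff.2 (hx n).2,
    fun n => finite_singleton _, fun U hU => ?_⟩
  rcases hB.toHasBasis.mem_iff.1 hU with ⟨m, -, hm⟩
  refine Set.Infinite.mono ?_ (Set.Ici_infinite m)
  intro n hn
  exact ⟨x n, rfl, hm (hB.antitone hn (hx n).1)⟩

lemma fc_of_hemi (h : Hemicompact X) : FirstCountableTopology C(X, ℝ) := by
  obtain ⟨K, hKc, hKcof⟩ := h
  refine ⟨fun f => ?_⟩
  have basis : (𝓝 f).HasBasis (fun _ : ℕ × ℕ => True)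
      (fun p => Mset f (K p.1) (1 / (p.2 + 1))) := by
    refine (nhds_basis_M f).to_hasBasis ?_ ?_
    · rintro ⟨Kc, V⟩ ⟨hKc', hV⟩
      rcases Metric.mem_uniformity_dist.1 hV with ⟨ε, hε, hεV⟩
      rcases hKcof Kc hKc' with ⟨n, hn⟩
      rcases exists_nat_one_div_lt hε with ⟨m, hm⟩
      exact ⟨(n, m), trivial, fun g hg x hx => hεV (lt_trans (hg x (hn hx)) hm)⟩
    · rintro ⟨n, m⟩ -
      exact ⟨(K n, {p : ℝ × ℝ | dist p.1 p.2 < 1 / (m + 1)}),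
        ⟨hKc n, Metric.dist_mem_uniformity (by positivity)⟩, fun g hg x hx => hg x hx⟩
  exact basis.isCountablyGenerated

lemma hemi_of_fc [T3Space X] [NormalSpace X] (h : FirstCountableTopology C(X, ℝ)) :
    Hemicompact X := by
  haveI := h
  obtain ⟨B, hB⟩ := (𝓝 (0 : C(X, ℝ))).exists_antitone_basis
  have hmem : ∀ n, ∃ K ε, IsCompact K ∧ 0 < ε ∧ Mset 0 K ε ⊆ B n := fun n =>
    exists_Mset_subset (hB.mem n)
  choose K ε hKc hε hsub using hmem
  refine ⟨K, hKc, fun C hC => ?_⟩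
  have h1 : Mset 0 C 1 ∈ 𝓝 (0 : C(X, ℝ)) := Mset_mem_nhds _ hC one_pos
  rcases hB.toHasBasis.mem_iff.1 h1 with ⟨n, -, hn⟩
  refine ⟨n, fun x₀ hx₀ => ?_⟩
  by_contra hx
  obtain ⟨f, hf0, hf1, -⟩ := exists_continuous_zero_one_of_isClosed (hKc n).isClosed
    isClosed_singleton (Set.disjoint_singleton_right.2 hx)
  have hfM : f ∈ Mset 0 (K n) (ε n) := by
    intro x hxK
    have hfx : f x = 0 := hf0 hxK
    simp [Mset, hfx]
    exact hε n
  have hd : dist ((0 : C(X, ℝ)) x₀) (f x₀) < 1 := hn (hsub n hfM) x₀ hx₀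
  have hfx₀ : f x₀ = 1 := hf1 rfl
  rw [hfx₀] at hd
  simp at hd

lemma network_of_knetwork {𝒦 : Set (Set X)} (h : IsKNetwork 𝒦) : IsNetwork 𝒦 := by
  intro x U hUo hxU
  rcases h U {x} hUo isCompact_singleton (singleton_subset_iff.2 hxU) with
    ⟨F, hF𝒦, hFfin, hxF, hFU⟩
  rcases hxF rfl with ⟨N, hNF, hxN⟩
  exact ⟨N, hF𝒦 hNF, hxN, fun y hy => hFU ⟨N, hNF, hy⟩⟩

theorem hemi_of_cft {X : Type u} [TopologicalSpace X] [T3Space X]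
    {𝒦 : Set (Set X)} (hc : 𝒦.Countable) (hk : IsKNetwork 𝒦)
    (hcft : CountableFanTightness C(X, ℝ)) : Hemicompact X := by
  classical
  have hnet : IsNetwork 𝒦 := network_of_knetwork hk
  haveI : LindelofSpace X :=
    ⟨isLindelof_of_countable_subcover fun U hU hs => net_subcover hc hnet U hU univ hs⟩
  -- the interpolating closed family Q
  have hSc : {F : Set (Set X) | F.Finite ∧ F ⊆ 𝒦}.Countable :=
    Set.countable_setOf_finite_subset hc
  have hSne : {F : Set (Set X) | F.Finite ∧ F ⊆ 𝒦}.Nonempty :=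
    ⟨∅, finite_empty, empty_subset _⟩
  obtain ⟨j, hj⟩ := (Set.countable_iff_exists_surjective hSne).1 hSc
  set Q : ℕ → Set X := fun n => closure (⋃₀ ((j n : Set (Set X)))) with hQdef
  have hQcl : ∀ n, IsClosed (Q n) := fun n => isClosed_closure
  have hQint : ∀ (K U : Set X), IsCompact K → IsOpen U → K ⊆ U →
      ∃ n, K ⊆ Q n ∧ Q n ⊆ U := by
    intro K U hK hUo hKU
    obtain ⟨V, hVo, hKV, hVU⟩ := hK.exists_isOpen_closure_subset (hUo.mem_nhdsSet.2 hKU)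
    rcases hk V K hVo hK hKV with ⟨F, hF𝒦, hFfin, hKF, hFV⟩
    rcases hj ⟨F, hFfin, hF𝒦⟩ with ⟨n, hn⟩
    refine ⟨n, ?_, ?_⟩
    · rw [hQdef]; simp only [hn]
      exact hKF.trans subset_closure
    · rw [hQdef]; simp only [hn]
      exact subset_trans (closure_mono hFV) hVU
  by_contra hH
  -- extract the bad compact set
  have key : ∃ C : Set X, IsCompact C ∧
      ∀ s : Finset ℕ, C ⊆ ⋂ i ∈ s, Q i → ¬ IsCompact (⋂ i ∈ s, Q i) := by
    by_contra hcon
    push_neg at hcon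
    apply hH
    obtain ⟨u, hu⟩ := exists_surjective_nat (Finset ℕ)
    refine ⟨fun n => if IsCompact (⋂ i ∈ u n, Q i) then ⋂ i ∈ u n, Q i else ∅, ?_, ?_⟩
    · intro n; dsimp only; split_ifs with h; exacts [h, isCompact_empty]
    · intro C hC
      rcases hcon C hC with ⟨s, hsub, hcomp⟩
      rcases hu s with ⟨n, rfl⟩
      exact ⟨n, by dsimp only; rw [if_pos hcomp]; exact hsub⟩
  obtain ⟨Kst, hKst, hbad⟩ := key
  set R : ℕ → Set X :=
    fun m => ⋂ i ∈ (Finset.range (m + 1)).filter (fun i => Kst ⊆ Q i), Q i with hRdef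
  have hRK : ∀ m, Kst ⊆ R m := by
    intro m
    refine subset_iInter₂ fun i hi => ?_
    exact (Finset.mem_filter.1 hi).2
  have hRcl : ∀ m, IsClosed (R m) := fun m => isClosed_biInter fun i _ => hQcl i
  have hRanti : ∀ a b, a ≤ b → R b ⊆ R a := by
    intro a b hab x hx
    refine mem_iInter₂.2 fun i hi => ?_
    rcases Finset.mem_filter.1 hi with ⟨hir, hiq⟩
    exact mem_iInter₂.1 hx i (Finset.mem_filter.2
      ⟨Finset.mem_range.2 (lt_of_lt_of_le (Finset.mem_range.1 hir) (by omega)), hiq⟩)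
  have hRnc : ∀ m, ¬ IsCompact (R m) := fun m h => hbad _ (hRK m) h
  have hRint : ∀ U : Set X, IsOpen U → Kst ⊆ U → ∃ m, R m ⊆ U := by
    intro U hUo hsub
    rcases hQint Kst U hKst hUo hsub with ⟨n, hKQ, hQU⟩
    refine ⟨n, subset_trans ?_ hQU⟩
    exact iInter₂_subset n (Finset.mem_filter.2 ⟨Finset.self_mem_range_succ n, hKQ⟩)
  -- discrete sets
  have hD : ∀ m, ∃ D : Set X, D ⊆ R m ∧ D.Infinite ∧
      ∀ z : X, ∃ O, IsOpen O ∧ z ∈ O ∧ (O ∩ D).Finite :=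
    fun m => exists_discrete_seq hc hnet (hRcl m) (hRnc m)
  choose D hDsub hDinf hDloc using hD
  have hDclosed : ∀ m (S : Set X), S ⊆ D m → IsClosed S := by
    intro m S hS
    refine isClosed_of_closure_subset fun z hz => ?_
    obtain ⟨O, hOo, hzO, hOfin⟩ := hDloc m z
    by_contra hzS
    have hcl : IsClosed (O ∩ S) :=
      ((hOfin.subset (inter_subset_inter_right O hS))).isClosed
    have hO' : IsOpen (O \ (O ∩ S)) := hOo.sdiff hcl
    have hzO' : z ∈ O \ (O ∩ S) := ⟨hzO, fun h => hzS h.2⟩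
    rcases mem_closure_iff.1 hz _ hO' hzO' with ⟨y, hy1, hy2⟩
    exact hy1.2 ⟨hy1.1, hy2⟩
  have hDcptfin : ∀ m (C : Set X), IsCompact C → (C ∩ D m).Finite := by
    intro m C hC
    choose O hOo hzO hOfin using hDloc m
    obtain ⟨t, -, ht⟩ := hC.elim_nhds_subcover O (fun z _ => (hOo z).mem_nhds (hzO z))
    refine Finite.subset (t.finite_toSet.biUnion fun z _ => hOfin z) ?_
    intro x hx
    rcases mem_iUnion₂.1 (ht hx.1) with ⟨z, hzt, hxz⟩
    exact mem_biUnion hzt ⟨hxz, hx.2⟩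
  -- fan tightness application
  set A : ℕ → Set C(X, ℝ) :=
    fun m => {f | ∃ E : Set X, E.Finite ∧ ∀ x ∈ D m \ E, 1 ≤ f x} with hAdef
  have h0A : ∀ m, (0 : C(X, ℝ)) ∈ closure (A m) := by
    intro m
    refine mem_closure_iff_nhds.2 fun s hs => ?_
    obtain ⟨C, ε, hCc, hε, hsub⟩ := exists_Mset_subset hs
    have hTcl : IsClosed (D m \ C) := hDclosed m _ diff_subset
    obtain ⟨f, hf0, hf1, -⟩ := exists_continuous_zero_one_of_isClosed hCc.isClosed hTcl
      disjoint_sdiff_right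
    refine ⟨f, hsub fun x hx => ?_, C ∩ D m, hDcptfin m C hCc, fun x hx => ?_⟩
    · have : f x = 0 := hf0 hx
      simp [this, hε]
    · have hxC : x ∉ C := fun h => hx.2 ⟨h, hx.1⟩
      have : f x = 1 := hf1 ⟨hx.1, hxC⟩
      rw [this]
  obtain ⟨F, hFA, hFfin, hFU⟩ := hcft 0 A h0A
  have hEm : ∀ m, ∃ Em : Set X, Em.Finite ∧ ∀ f ∈ F m, ∀ x ∈ D m \ Em, 1 ≤ f x := by
    intro m
    have hw : ∀ f ∈ F m, ∃ E : Set X, E.Finite ∧ ∀ x ∈ D m \ E, 1 ≤ f x :=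
      fun f hf => hFA m hf
    choose! E hE1 hE2 using hw
    refine ⟨⋃ f ∈ F m, E f, (hFfin m).biUnion fun f hf => hE1 f hf, ?_⟩
    intro f hf x hx
    exact hE2 f hf x ⟨hx.1, fun h => hx.2 (mem_biUnion hf h)⟩
  choose Em hEmfin hEmprop using hEm
  have hyne : ∀ m, ((D m) \ Em m).Nonempty :=
    fun m => ((hDinf m).diff (hEmfin m)).nonempty
  choose y hy using hyne
  have hyD : ∀ m, y m ∈ D m := fun m => (hy m).1
  have hyval : ∀ m, ∀ f ∈ F m, 1 ≤ f (y m) := fun m f hf => hEmprop m f hf _ (hy m)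
  -- the compact set Kst ∪ range y
  have hCst : IsCompact (Kst ∪ range y) := by
    refine isCompact_iff_finite_subcover.2 ?_
    intro ι U hUo hcov
    obtain ⟨t₀, ht₀⟩ := hKst.elim_finite_subcover U hUo
      (subset_trans subset_union_left hcov)
    have hOo : IsOpen (⋃ i ∈ t₀, U i) := isOpen_biUnion fun i _ => hUo i
    obtain ⟨M, hM⟩ := hRint _ hOo ht₀
    have hidx : ∀ m, ∃ i, y m ∈ U i :=
      fun m => mem_iUnion.1 (hcov (subset_union_right ⟨m, rfl⟩))
    choose idx hidx' using hidx
    refine ⟨t₀ ∪ (Finset.range M).image idx, ?_⟩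
    rintro x (hx | ⟨m, rfl⟩)
    · rcases mem_iUnion₂.1 (ht₀ hx) with ⟨i, hit, hxi⟩
      exact mem_biUnion (Finset.mem_union_left _ hit) hxi
    · by_cases hm : m < M
      · exact mem_biUnion (Finset.mem_union_right _
          (Finset.mem_image_of_mem idx (Finset.mem_range.2 hm))) (hidx' m)
      · have : y m ∈ ⋃ i ∈ t₀, U i := hM (hRanti M m (by omega) (hDsub m (hyD m)))
        rcases mem_iUnion₂.1 this with ⟨i, hit, hxi⟩
        exact mem_biUnion (Finset.mem_union_left _ hit) hxi
  -- contradiction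
  have h1 : Mset 0 (Kst ∪ range y) 1 ∈ 𝓝 (0 : C(X, ℝ)) := Mset_mem_nhds _ hCst one_pos
  obtain ⟨m, hm⟩ := (hFU _ h1).nonempty
  obtain ⟨f, hfF, hfM⟩ := hm
  have hlt : dist ((0 : C(X, ℝ)) (y m)) (f (y m)) < 1 :=
    hfM _ (Or.inr ⟨m, rfl⟩)
  have hge : (1 : ℝ) ≤ f (y m) := hyval m f hfF
  rw [ContinuousMap.zero_apply, Real.dist_eq, zero_sub, abs_neg] at hlt
  exact absurd (lt_of_le_of_lt (le_trans hge (le_abs_self _)) hlt) (lt_irrefl 1)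

end Aux

/-- For a regular space `X` with a countable k-network, the function space `C_k(X, ℝ)`
has countable fan tightness iff it is first countable iff `X` is hemicompact. -/
theorem functionSpace_fanTightness_iff_firstCountable_iff_hemicompact
    {X : Type*} [TopologicalSpace X] [T3Space X]
    (h𝒦 : ∃ 𝒦 : Set (Set X), 𝒦.Countable ∧ IsKNetwork 𝒦) :
    (CountableFanTightness C(X, ℝ) ↔ FirstCountableTopology C(X, ℝ)) ∧
    (FirstCountableTopology C(X, ℝ) ↔ Hemicompact X) := by
  obtain ⟨𝒦, hc, hk⟩ := h𝒦
  have hnet : IsNetwork 𝒦 := network_of_knetwork hk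
  haveI : LindelofSpace X :=
    ⟨isLindelof_of_countable_subcover fun U hU hs => net_subcover hc hnet U hU univ hs⟩
  exact ⟨⟨fun hcft => fc_of_hemi (hemi_of_cft hc hk hcft), fun hfc => cft_of_fc hfc⟩,
    ⟨fun hfc => hemi_of_fc hfc, fun hh => fc_of_hemi hh⟩⟩
end

section
/- Let p be a free (nonprincipal) ultrafilter on ℕ and let X = ℕ ∪ {p} be the corresponding subspace of βℕ (i.e., ℕ with the discrete topology together with the point p, whose neighborhoods are the sets {p} ∪ A with A ∈ p). Then X admits no countable Pytkeev π-network at p; in particular X has no countable Pytkeev network. -/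
open Set Filter Topology TopologicalSpace

/-- `Pnet` is a Pytkeev π-network at `x`: a network at `x` such that every open neighborhood
of `x` contains an infinite member of `Pnet`. -/
def IsPytkeevPiNetworkAt {X : Type*} [TopologicalSpace X] (Pnet : Set (Set X)) (x : X) : Prop :=
  IsNetworkAt Pnet x ∧ ∀ U : Set X, IsOpen U → x ∈ U → ∃ N ∈ Pnet, N ⊆ U ∧ N.Infinite

/-- The topology of the space `ℕ ∪ {p}` for an ultrafilter `p` on `ℕ`, realized on
`Option ℕ` with `none` playing the role of `p`: points of `ℕ` are isolated and
the neighborhoods of `p` are the sets `{p} ∪ A` with `A ∈ p`. -/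
def ultrafilterTopology (p : Ultrafilter ℕ) : TopologicalSpace (Option ℕ) :=
  TopologicalSpace.generateFrom
    {S : Set (Option ℕ) | (∃ n : ℕ, S = {Option.some n}) ∨
      ∃ A ∈ p, S = insert none (Option.some '' A)}

/-!
For `C ∈ p` the set `{p} ∪ C` is a neighborhood of `p`, so a π-network at `p` has an infinite
member whose trace on `ℕ` is an infinite subset of `C`. Given countably many
infinite subsets `Bₖ` of `ℕ`, pick a strictly increasing sequence `zₙ ∈ B_{⌊n/2⌋}` and let `D`
be its even-indexed part: each `Bₖ` meets both `D` and its complement. One of `D`, `Dᶜ` lies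
in `p`, and no `Bₖ` is contained in it. Since `p` is free, every neighborhood of `p` is
infinite, so a Pytkeev network is in particular a Pytkeev π-network at `p`.
-/

theorem Set.Countable.exists_forall_inter_nonempty_and_diff_nonempty {S : Set (Set ℕ)}
    (hS : S.Countable) (hinf : ∀ B ∈ S, B.Infinite) :
    ∃ D : Set ℕ, ∀ B ∈ S, (B ∩ D).Nonempty ∧ (B \ D).Nonempty := by
  rcases S.eq_empty_or_nonempty with rfl | hne
  · exact ⟨∅, fun _ h => h.elim⟩
  obtain ⟨f, rfl⟩ := hS.exists_eq_range hne
  obtain ⟨z, hz, hzf⟩ : ∃ z : ℕ → ℕ, StrictMono z ∧ ∀ n, z n ∈ f (n / 2) :=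
    extraction_forall_of_frequently fun n =>
      Nat.frequently_atTop_iff_infinite.2 (hinf _ (mem_range_self _))
  refine ⟨range fun k => z (2 * k), forall_mem_range.2 fun k => ⟨⟨z (2 * k), ?_, k, rfl⟩,
    ⟨z (2 * k + 1), ?_, ?_⟩⟩⟩
  · simpa using hzf (2 * k)
  · simpa [Nat.add_div_of_dvd_right] using hzf (2 * k + 1)
  · rintro ⟨j, hj⟩
    have := hz.injective hj
    omega

theorem Ultrafilter.exists_mem_forall_not_subset {S : Set (Set ℕ)} (p : Ultrafilter ℕ)
    (hS : S.Countable) (hinf : ∀ B ∈ S, B.Infinite) : ∃ C ∈ p, ∀ B ∈ S, ¬ B ⊆ C := by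
  obtain ⟨D, hD⟩ := hS.exists_forall_inter_nonempty_and_diff_nonempty hinf
  by_cases hDp : D ∈ p
  · refine ⟨D, hDp, fun B hB hBD => ?_⟩
    obtain ⟨x, hxB, hxD⟩ := (hD B hB).2
    exact hxD (hBD hxB)
  · refine ⟨Dᶜ, Ultrafilter.compl_mem_iff_notMem.2 hDp, fun B hB hBD => ?_⟩
    obtain ⟨x, hxB, hxD⟩ := (hD B hB).1
    exact hBD hxB hxD

theorem Ultrafilter.infinite_of_mem {p : Ultrafilter ℕ} (hfree : ∀ n : ℕ, ({n} : Set ℕ) ∉ p)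
    {A : Set ℕ} (hA : A ∈ p) : A.Infinite := by
  have hp : (p : Filter ℕ) ≤ cofinite :=
    le_cofinite_iff_compl_singleton_mem.2 fun n => Ultrafilter.compl_mem_iff_notMem.2 (hfree n)
  exact frequently_cofinite_mem_iff_infinite.1 ((Eventually.frequently hA).filter_mono hp)

theorem Set.Infinite.preimage_some {α : Type*} {N : Set (Option α)} (hN : N.Infinite) :
    (some ⁻¹' N).Infinite := by
  refine Infinite.preimage' ((hN.sdiff (finite_singleton none)).mono ?_)
  rw [← compl_range_some, sdiff_eq, compl_compl]

theorem IsPytkeevNetwork.isPytkeevPiNetworkAt {X : Type*} [TopologicalSpace X]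
    {𝒩 : Set (Set X)} {x : X} (h𝒩 : IsPytkeevNetwork 𝒩) (hx : AccumulatesAt univ x) :
    IsPytkeevPiNetworkAt 𝒩 x := by
  refine ⟨fun U hU hxU => h𝒩.1 x U hU hxU, fun U hU hxU => ?_⟩
  obtain ⟨N, hN, hNU, hNinf⟩ := h𝒩.2 x U hU hxU univ hx
  exact ⟨N, hN, hNU, by simpa using hNinf⟩

theorem isOpen_insert_none_image_some (p : Ultrafilter ℕ) {A : Set ℕ} (hA : A ∈ p) :
    IsOpen[ultrafilterTopology p] (insert none (some '' A)) :=
  isOpen_generateFrom_of_mem (Or.inr ⟨A, hA, rfl⟩)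

theorem map_some_le_nhds_none (p : Ultrafilter ℕ) :
    map some (p : Filter ℕ) ≤ @nhds _ (ultrafilterTopology p) none := by
  refine (gc_nhds none).le_iff_le.1 (le_generateFrom fun S hS hnone => ?_)
  rcases hS with ⟨n, rfl⟩ | ⟨A, hA, rfl⟩
  · simp at hnone
  · exact mem_map.2 (mem_of_superset hA fun n hn => Or.inr ⟨n, hn, rfl⟩)

theorem accumulatesAt_univ_none {p : Ultrafilter ℕ} (hfree : ∀ n : ℕ, ({n} : Set ℕ) ∉ p) :
    @AccumulatesAt _ (ultrafilterTopology p) univ none := fun U hU hfin =>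
  Ultrafilter.infinite_of_mem hfree (map_some_le_nhds_none p hU)
    ((inter_univ U ▸ hfin).preimage (Option.some_injective ℕ).injOn)

theorem not_isPytkeevPiNetworkAt_none (p : Ultrafilter ℕ) {P : Set (Set (Option ℕ))}
    (hP : P.Countable) : ¬ @IsPytkeevPiNetworkAt _ (ultrafilterTopology p) P none := by
  rintro ⟨-, hinf⟩
  obtain ⟨C, hCp, hC⟩ := p.exists_mem_forall_not_subset
    ((hP.mono (sep_subset P Set.Infinite)).image (some ⁻¹' ·))
    (by rintro _ ⟨N, ⟨-, hN⟩, rfl⟩; exact hN.preimage_some)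
  obtain ⟨N, hNP, hNC, hN⟩ := hinf _ (isOpen_insert_none_image_some p hCp) (mem_insert _ _)
  exact hC _ ⟨N, ⟨hNP, hN⟩, rfl⟩ fun n hn => by simpa using hNC hn

/-- For a free ultrafilter `p` on `ℕ`, the space `ℕ ∪ {p}` has no countable Pytkeev
π-network at `p`; in particular it has no countable Pytkeev network. -/
theorem ultrafilterSpace_no_countable_pytkeevPiNetwork (p : Ultrafilter ℕ)
    (hfree : ∀ n : ℕ, ({n} : Set ℕ) ∉ p) :
    (∀ Pnet : Set (Set (Option ℕ)), Pnet.Countable →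
      ¬ @IsPytkeevPiNetworkAt (Option ℕ) (ultrafilterTopology p) Pnet none) ∧
    ¬ ∃ 𝒩 : Set (Set (Option ℕ)), 𝒩.Countable ∧
      @IsPytkeevNetwork (Option ℕ) (ultrafilterTopology p) 𝒩 := by
  let := ultrafilterTopology p
  refine ⟨fun _ => not_isPytkeevPiNetworkAt_none p, ?_⟩
  rintro ⟨𝒩, hc, h𝒩⟩
  exact not_isPytkeevPiNetworkAt_none p hc
    (h𝒩.isPytkeevPiNetworkAt (accumulatesAt_univ_none hfree))
end
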